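/- Let c ∈ S with (1−c)² > 2/3, T₀ = ⌈2/(3δ²)⌉, and T′ = min{s ≥ 0 : V_{T₀+s} < c}. Then for every v ∈ S, the expected revenue of the free-trial-plus-PPP scheme satisfies c·E_v[T′] ≥ (c·v/2)·( ((1−c)² − 2/3)/δ² − 1 ). In particular, for fixed c with (1−c)² > 2/3, this revenue is Ω(v/δ²), a constant fraction of the buyer's expected cumulative value C(v). -/

import Mathlib

open MeasureTheory ProbabilityTheory

noncomputable section

/-- The driving noise: an i.i.d. sequence `ξ`, each `ξ i` uniform on `{-1, 1}`. -/
def IsCoinSeq {Ω : Type} [MeasurableSpace Ω] (P : Measure Ω) (ξ : ℕ → Ω → ℝ) : Prop :=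
  (∀ i, Measurable (ξ i)) ∧
  iIndepFun (m := fun _ => Real.measurableSpace) ξ P ∧
  ∀ i, Measure.map (ξ i) P
      = (1 / 2 : ENNReal) • Measure.dirac (1 : ℝ) + (1 / 2 : ENNReal) • Measure.dirac (-1 : ℝ)

/-- The state space `S = {0, δ, 2δ, …, 1}` with `δ = 1/n`. -/
def stateSpace (n : ℕ) : Set ℝ := {x | ∃ k : ℕ, k ≤ n ∧ x = (k : ℝ) / n}

/-- The value chain of the random-walk model started at `v`, driven by the noise `ξ`:
absorption at `0`, reflection (deterministic move to `1 - δ`) at `1`, and a `± δ` step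
(according to the coin `ξ t`) from any other state. -/
def walk {Ω : Type} (δ : ℝ) (ξ : ℕ → Ω → ℝ) (v : ℝ) : ℕ → Ω → ℝ
  | 0 => fun _ => v
  | (t + 1) => fun ω =>
      let x := walk δ ξ v t ω
      if x = 0 then 0 else if x = 1 then 1 - δ else x + δ * ξ t ω

/-- First hitting time of level `u` (with value `0` by convention if `u` is never hit). -/
def hitTime {Ω : Type} (V : ℕ → Ω → ℝ) (u : ℝ) (ω : Ω) : ℕ := sInf {t | V t ω = u}

/-- First hitting time of the set `{0, 1}`. -/
def hitTime01 {Ω : Type} (V : ℕ → Ω → ℝ) (ω : Ω) : ℕ := sInf {t | V t ω = 0 ∨ V t ω = 1}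

/-- one step of the walk -/
def stepf (d x z : ℝ) : ℝ := if x = 0 then 0 else if x = 1 then 1 - d else x + d * z

lemma walk_succ {Ω : Type} (δ : ℝ) (ξ : ℕ → Ω → ℝ) (v : ℝ) (t : ℕ) (ω : Ω) :
    walk δ ξ v (t+1) ω = stepf δ (walk δ ξ v t ω) (ξ t ω) := rfl

section Lattice

variable {n : ℕ} {d x c : ℝ}

lemma npos (hn : 2 ≤ n) : (0:ℝ) < n := by positivity

lemma mem_nonneg (hx : x ∈ stateSpace n) : 0 ≤ x := by
  obtain ⟨k, _, rfl⟩ := hx; positivity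

lemma mem_le_one (hn : 2 ≤ n) (hx : x ∈ stateSpace n) : x ≤ 1 := by
  obtain ⟨k, hk, rfl⟩ := hx
  rw [div_le_one (npos hn)]
  exact_mod_cast hk

lemma mem_ge (hn : 2 ≤ n) (hd : d = 1/n) (hx : x ∈ stateSpace n) (hx0 : x ≠ 0) : d ≤ x := by
  obtain ⟨k, hk, rfl⟩ := hx
  have hk1 : 1 ≤ k := by
    rcases Nat.eq_zero_or_pos k with h | h
    · subst h; simp at hx0
    · exact h
  rw [hd]
  have hp := npos hn
  rw [div_le_div_iff_of_pos_right hp]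
  exact_mod_cast hk1

lemma mem_le (hn : 2 ≤ n) (hd : d = 1/n) (hx : x ∈ stateSpace n) (hx1 : x ≠ 1) : x ≤ 1 - d := by
  obtain ⟨k, hk, rfl⟩ := hx
  have hkn : k ≠ n := by
    intro h; subst h; exact hx1 (div_self (ne_of_gt (npos hn)))
  have hk : k + 1 ≤ n := Nat.succ_le_of_lt (lt_of_le_of_ne hk hkn)
  have hp := npos hn
  rw [hd]
  have h2 : ((k:ℝ) + 1) / n ≤ 1 := by
    rw [div_le_one hp]; exact_mod_cast hk
  have : (k:ℝ)/n + 1/n = ((k:ℝ)+1)/n := by ring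
  linarith

lemma mem_lt_mem (hn : 2 ≤ n) (hd : d = 1/n) (hx : x ∈ stateSpace n) (hc : c ∈ stateSpace n)
    (h : x < c) : x + d ≤ c := by
  obtain ⟨k, hk, rfl⟩ := hx
  obtain ⟨j, hj, rfl⟩ := hc
  have hp := npos hn
  have : (k:ℝ) < j := by
    rwa [div_lt_div_iff_of_pos_right hp] at h
  have hkj : k + 1 ≤ j := by exact_mod_cast this
  rw [hd]
  have : (k:ℝ)/n + 1/n = ((k:ℝ)+1)/n := by ring
  rw [this, div_le_div_iff_of_pos_right hp]
  exact_mod_cast hkj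

lemma zero_mem : (0:ℝ) ∈ stateSpace n := ⟨0, Nat.zero_le _, by simp⟩

lemma one_sub_mem (hn : 2 ≤ n) (hd : d = 1/n) : 1 - d ∈ stateSpace n := by
  refine ⟨n - 1, Nat.sub_le _ _, ?_⟩
  have hp := npos hn
  have : ((n - 1 : ℕ) : ℝ) = (n : ℝ) - 1 := by
    have : 1 ≤ n := by omega
    push_cast [this]; ring
  rw [this, hd, sub_div, div_self (ne_of_gt hp)]

lemma latAdd (hn : 2 ≤ n) (hd : d = 1/n) (hx : x ∈ stateSpace n) (hx1 : x ≠ 1) :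
    x + d ∈ stateSpace n := by
  obtain ⟨k, hk, rfl⟩ := hx
  have hkn : k ≠ n := fun h => hx1 (by subst h; exact div_self (ne_of_gt (npos hn)))
  refine ⟨k + 1, by omega, ?_⟩
  rw [hd]; push_cast; rw [← add_div]

lemma latSub (hn : 2 ≤ n) (hd : d = 1/n) (hx : x ∈ stateSpace n) (hx0 : x ≠ 0) :
    x - d ∈ stateSpace n := by
  obtain ⟨k, hk, rfl⟩ := hx
  have hk1 : 1 ≤ k := by
    rcases Nat.eq_zero_or_pos k with h | h
    · subst h; simp at hx0
    · exact h
  refine ⟨k - 1, by omega, ?_⟩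
  have : ((k - 1 : ℕ) : ℝ) = (k : ℝ) - 1 := by push_cast [hk1]; ring
  rw [this, hd]; ring

lemma stepf_mem (hn : 2 ≤ n) (hd : d = 1/n) (hx : x ∈ stateSpace n) {z : ℝ}
    (hz : z = 1 ∨ z = -1) : stepf d x z ∈ stateSpace n := by
  unfold stepf
  split_ifs with h0 h1
  · exact zero_mem
  · exact one_sub_mem hn hd
  · rcases hz with rfl | rfl
    · simpa [mul_one] using latAdd hn hd hx h1
    · have := latSub hn hd hx h0
      simpa [mul_neg_one, sub_eq_add_neg] using this

end Lattice

section Algebra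

variable {d c x : ℝ} {T₀ t : ℕ}

/-- the expected-hitting-time function -/
def gfun (d c x : ℝ) : ℝ := (x - c + d) * (2 - c + d - x) / d^2
def gp (d c x : ℝ) : ℝ := max (gfun d c x) 0
def wfun (d x : ℝ) : ℝ := x * (1 - x^2) / (3*d^2)
def Gc (d c : ℝ) (T₀ : ℕ) : ℝ := gfun d c 1 - T₀
def rho (d : ℝ) (T₀ t : ℕ) : ℝ := (T₀:ℝ) - t + d
def h1 (d c : ℝ) (T₀ : ℕ) (x : ℝ) (t : ℕ) : ℝ := Gc d c T₀ * (x - wfun d x / rho d T₀ t)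
def h2 (d c : ℝ) (T₀ : ℕ) (x : ℝ) (t : ℕ) : ℝ := gp d c x - ((T₀:ℝ) - t)
def Psi (d c : ℝ) (T₀ : ℕ) (x : ℝ) (t : ℕ) : ℝ :=
  max (h1 d c T₀ x t) (max (h2 d c T₀ x t) 0)
def clamp (x : ℝ) : ℝ := max 0 (min 1 x)
def Psic (d c : ℝ) (T₀ : ℕ) (x : ℝ) (t : ℕ) : ℝ := Psi d c T₀ (clamp x) t
def gpc (d c x : ℝ) : ℝ := gp d c (clamp x)

lemma clamp_eq (h0 : 0 ≤ x) (h1 : x ≤ 1) : clamp x = x := by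
  unfold clamp; rw [min_eq_right h1, max_eq_right h0]

lemma clamp_mem_Icc : clamp x ∈ Set.Icc (0:ℝ) 1 := by
  constructor
  · exact le_max_left _ _
  · unfold clamp
    exact max_le (by norm_num) (min_le_left _ _)

lemma avg_g (hd0 : d ≠ 0) : (gfun d c (x+d) + gfun d c (x-d))/2 = gfun d c x - 1 := by
  unfold gfun; field_simp; ring

lemma gp_nonneg : 0 ≤ gp d c x := le_max_right _ _

lemma gp_ge : gfun d c x ≤ gp d c x := le_max_left _ _

lemma gp_avg (hd0 : d ≠ 0) : gp d c x - 1 ≤ (gp d c (x+d) + gp d c (x-d))/2 := by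
  rcases max_cases (gfun d c x) (0:ℝ) with ⟨h, _⟩ | ⟨h, _⟩
  · rw [gp, h, ← avg_g (c := c) hd0]
    have := gp_ge (d := d) (c := c) (x := x + d)
    have := gp_ge (d := d) (c := c) (x := x - d)
    linarith
  · rw [gp, h]
    have := gp_nonneg (d := d) (c := c) (x := x + d)
    have := gp_nonneg (d := d) (c := c) (x := x - d)
    linarith

lemma g_one_sub (hd0 : d ≠ 0) : gfun d c (1-d) = gfun d c 1 - 1 := by
  unfold gfun; field_simp; ring

lemma g_one_nonneg (hd0 : 0 < d) (hc1 : c ≤ 1) : 0 ≤ gfun d c 1 := by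
  unfold gfun
  have h2 : (0:ℝ) < d^2 := by positivity
  apply div_nonneg _ (le_of_lt h2)
  nlinarith

lemma g_one_sub_nonneg (hd0 : 0 < d) (hc1 : c ≤ 1) : 0 ≤ gfun d c (1-d) := by
  unfold gfun
  have h2 : (0:ℝ) < d^2 := by positivity
  apply div_nonneg _ (le_of_lt h2)
  nlinarith

lemma gp_one (hd0 : 0 < d) (hc1 : c ≤ 1) : gp d c 1 = gfun d c 1 :=
  max_eq_left (g_one_nonneg hd0 hc1)

lemma gp_one_sub (hd0 : 0 < d) (hc1 : c ≤ 1) : gp d c (1-d) = gfun d c 1 - 1 := by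
  rw [gp, max_eq_left (g_one_sub_nonneg hd0 hc1), g_one_sub (ne_of_gt hd0)]

lemma gp_zero_of_le (hd0 : 0 < d) (hc1 : c ≤ 1) (hx : x ≤ c - d) : gp d c x = 0 := by
  rw [gp, max_eq_right]
  unfold gfun
  apply div_nonpos_of_nonpos_of_nonneg
  · nlinarith
  · positivity

lemma gp_le_g1 (hd0 : 0 < d) (hc1 : c ≤ 1) : gp d c x ≤ gfun d c 1 := by
  apply max_le _ (g_one_nonneg hd0 hc1)
  unfold gfun
  have h2 : (0:ℝ) < d^2 := by positivity
  rw [div_le_div_iff_of_pos_right h2]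
  nlinarith [sq_nonneg (1 - x)]

lemma avg_w (hd0 : d ≠ 0) : (wfun d (x+d) + wfun d (x-d))/2 = wfun d x - x := by
  unfold wfun; field_simp; ring

lemma wfun_zero : wfun d 0 = 0 := by simp [wfun]
lemma wfun_one : wfun d 1 = 0 := by simp [wfun]

end Algebra

section PsiLemmas

variable {d c x : ℝ} {T₀ t : ℕ}

lemma rho_pos (hd0 : 0 < d) (ht : t ≤ T₀) : 0 < rho d T₀ t := by
  have : (t:ℝ) ≤ T₀ := by exact_mod_cast ht
  unfold rho; linarith

lemma rho_succ (ht : t < T₀) : rho d T₀ t = rho d T₀ (t+1) + 1 := by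
  unfold rho; push_cast; ring

lemma Gc_pos (hd0 : 0 < d) (hc1 : c ≤ 1) (hc23 : 2/3 < (1-c)^2)
    (hT₀u : (T₀:ℝ) < 2/(3*d^2) + 1) : 0 < Gc d c T₀ := by
  unfold Gc gfun
  have h2 : (0:ℝ) < d^2 := by positivity
  have e0 : (2/(3*d^2) + 1)*d^2 = 2/3 + d^2 := by field_simp
  have key : 2/(3*d^2) + 1 < (1 - c + d) * (2 - c + d - 1) / d^2 := by
    rw [show (1 - c + d) * (2 - c + d - 1) = (1-c+d)^2 by ring]
    rw [lt_div_iff₀ h2, e0]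
    nlinarith [mul_nonneg hd0.le (sub_nonneg.2 hc1)]
  linarith

lemma Gc_lb (hd0 : 0 < d) (hc1 : c ≤ 1)
    (hT₀u : (T₀:ℝ) < 2/(3*d^2) + 1) : ((1-c)^2 - 2/3)/d^2 - 1 ≤ Gc d c T₀ := by
  unfold Gc
  have h2 : (0:ℝ) < d^2 := by positivity
  have e1 : ((1-c)^2-2/3)/d^2 + 2/(3*d^2) = (1-c)^2/d^2 := by field_simp; ring
  have e2 : (1-c)^2/d^2 ≤ (1-c+d)^2/d^2 := by
    rw [div_le_div_iff_of_pos_right h2]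
    nlinarith [mul_nonneg hd0.le (sub_nonneg.2 hc1)]
  have e3 : gfun d c 1 = (1-c+d)^2/d^2 := by unfold gfun; congr 1; ring
  rw [e3]; linarith

lemma Psi_zero (hd0 : 0 < d) (hc1 : c ≤ 1) (hcd : d ≤ c) (ht : t ≤ T₀) :
    Psi d c T₀ 0 t = 0 := by
  have hT : (t:ℝ) ≤ T₀ := by exact_mod_cast ht
  have e1 : h1 d c T₀ 0 t = 0 := by simp [h1, wfun_zero]
  have e2 : h2 d c T₀ 0 t ≤ 0 := by
    rw [h2, gp_zero_of_le hd0 hc1 (by linarith)]; linarith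
  rw [Psi, e1, max_eq_right e2, max_self]

lemma Psi_one (hd0 : 0 < d) (hc1 : c ≤ 1) (ht : t < T₀) :
    Psi d c T₀ 1 t ≤ Psi d c T₀ (1-d) (t+1) := by
  have hh2 : h2 d c T₀ 1 t = h2 d c T₀ (1-d) (t+1) := by
    rw [h2, h2, gp_one hd0 hc1, gp_one_sub hd0 hc1]
    push_cast; ring
  have hR2 : h2 d c T₀ 1 t ≤ Psi d c T₀ (1-d) (t+1) := by
    rw [hh2]; exact le_trans (le_max_left _ _) (le_max_right _ _)
  have hR0 : (0:ℝ) ≤ Psi d c T₀ (1-d) (t+1) :=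
    le_trans (le_max_right _ _) (le_max_right _ _)
  apply max_le _ (max_le hR2 hR0)
  -- h1 1 t ≤ h2 1 t
  refine le_trans ?_ hR2
  rw [h1, h2, gp_one hd0 hc1, wfun_one, Gc]
  have hT : (t:ℝ) ≥ 0 := by positivity
  simp only [zero_div, sub_zero, mul_one]
  linarith

lemma Psi_interior (hd0 : 0 < d) (hG : 0 < Gc d c T₀) (ht : t < T₀) :
    Psi d c T₀ x t ≤ (Psi d c T₀ (x+d) (t+1) + Psi d c T₀ (x-d) (t+1))/2 := by
  have hP1 : ∀ y, h1 d c T₀ y (t+1) ≤ Psi d c T₀ y (t+1) := fun y => le_max_left _ _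
  have hP2 : ∀ y, h2 d c T₀ y (t+1) ≤ Psi d c T₀ y (t+1) :=
    fun y => le_trans (le_max_left _ _) (le_max_right _ _)
  have hP0 : ∀ y, (0:ℝ) ≤ Psi d c T₀ y (t+1) :=
    fun y => le_trans (le_max_right _ _) (le_max_right _ _)
  have hr' : 0 < rho d T₀ (t+1) := rho_pos hd0 ht
  have hr : rho d T₀ t = rho d T₀ (t+1) + 1 := rho_succ ht
  apply max_le _ (max_le _ _)
  · -- h1
    by_cases hpos : h1 d c T₀ x t ≤ 0
    · refine le_trans hpos ?_
      have := hP0 (x+d); have := hP0 (x-d); linarith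
    · push_neg at hpos
      have hwx : wfun d x < rho d T₀ t * x := by
        rw [h1] at hpos
        have h3 : 0 < x - wfun d x / rho d T₀ t := by
          by_contra h; push_neg at h
          nlinarith
        have hrp : 0 < rho d T₀ t := by rw [hr]; linarith
        rw [sub_pos, div_lt_iff₀ hrp] at h3
        linarith [h3]
      refine le_trans ?_ (by linarith [hP1 (x+d), hP1 (x-d)] :
        (h1 d c T₀ (x+d) (t+1) + h1 d c T₀ (x-d) (t+1))/2
          ≤ (Psi d c T₀ (x+d) (t+1) + Psi d c T₀ (x-d) (t+1))/2)
      have hsum : wfun d (x+d) + wfun d (x-d) = 2*(wfun d x - x) := by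
        have := avg_w (d := d) (x := x) (ne_of_gt hd0)
        linarith
      have havg : (h1 d c T₀ (x+d) (t+1) + h1 d c T₀ (x-d) (t+1))/2
          = Gc d c T₀ * (x - (wfun d x - x) / rho d T₀ (t+1)) := by
        rw [h1, h1]
        have hrne : rho d T₀ (t+1) ≠ 0 := ne_of_gt hr'
        field_simp
        linear_combination (-1) * hsum
      rw [havg, h1]
      apply mul_le_mul_of_nonneg_left _ (le_of_lt hG)
      have hrt : 0 < rho d T₀ t := by rw [hr]; linarith
      rw [sub_le_sub_iff_left, div_le_div_iff₀ hr' hrt]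
      rw [hr] at hwx ⊢
      nlinarith
  · -- h2
    refine le_trans ?_ (by linarith [hP2 (x+d), hP2 (x-d)] :
      (h2 d c T₀ (x+d) (t+1) + h2 d c T₀ (x-d) (t+1))/2
        ≤ (Psi d c T₀ (x+d) (t+1) + Psi d c T₀ (x-d) (t+1))/2)
    have := gp_avg (d := d) (c := c) (x := x) (ne_of_gt hd0)
    rw [h2, h2, h2]
    push_cast
    linarith
  · linarith [hP0 (x+d), hP0 (x-d)]

lemma Psi_terminal (hd0 : 0 < d) (hdh : d ≤ 1/2) (hc1 : c ≤ 1) (hG : 0 ≤ Gc d c T₀)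
    (h0 : 0 ≤ x) (hx : x = 1 ∨ x ≤ 1 - d) : Psi d c T₀ x T₀ ≤ gp d c x := by
  have hrT : rho d T₀ T₀ = d := by unfold rho; ring
  apply max_le _ (max_le _ gp_nonneg)
  · rcases hx with rfl | hx
    · rw [h1, hrT, wfun_one, gp_one hd0 hc1, Gc]
      have : (0:ℝ) ≤ T₀ := by positivity
      simp only [zero_div, sub_zero, mul_one]
      linarith
    · have hA : x - wfun d x / rho d T₀ T₀ ≤ 0 := by
        rw [hrT, sub_nonpos, le_div_iff₀ hd0]
        unfold wfun
        rw [le_div_iff₀ (by positivity : (0:ℝ) < 3*d^2)]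
        have hd2 : (0:ℝ) ≤ 2-d-3*d^2 := by
          nlinarith [mul_le_mul_of_nonneg_left hdh hd0.le]
        have hx2 : (0:ℝ) ≤ 1 - x^2 - 3*d^3 := by
          nlinarith [mul_nonneg (sub_nonneg.2 hx) (by linarith : (0:ℝ) ≤ 1-d+x),
            mul_nonneg hd0.le hd2]
        nlinarith [mul_nonneg h0 hx2]
      calc h1 d c T₀ x T₀ ≤ 0 := mul_nonpos_of_nonneg_of_nonpos hG hA
      _ ≤ gp d c x := gp_nonneg
  · rw [h2, sub_self, sub_zero]

lemma Psi_start (hd0 : 0 < d) (hG : 0 ≤ Gc d c T₀) (h0 : 0 ≤ x) (hx1 : x ≤ 1)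
    (hT₀l : 2/(3*d^2) ≤ (T₀:ℝ)) :
    Gc d c T₀ * x / 2 ≤ Psi d c T₀ x 0 := by
  refine le_trans ?_ (le_max_left _ _)
  rw [h1]
  have hr0 : rho d T₀ 0 = (T₀:ℝ) + d := by unfold rho; push_cast; ring
  have h3 : (0:ℝ) < 3*d^2 := by positivity
  have hrp : (0:ℝ) < 2/(3*d^2) := by positivity
  have hwle : wfun d x / rho d T₀ 0 ≤ x / 2 := by
    have hw0 : 0 ≤ wfun d x := by
      unfold wfun; apply div_nonneg _ (le_of_lt h3); nlinarith
    have hwb : wfun d x ≤ x / (3*d^2) := by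
      unfold wfun; rw [div_le_div_iff₀ h3 h3]
      nlinarith [mul_nonneg (mul_nonneg h0 (sq_nonneg x)) h3.le]
    have hρ : 2/(3*d^2) ≤ rho d T₀ 0 := by rw [hr0]; linarith
    have step1 : wfun d x / rho d T₀ 0 ≤ wfun d x / (2/(3*d^2)) :=
      div_le_div_of_nonneg_left hw0 hrp hρ
    have e : wfun d x / (2/(3*d^2)) = x*(1-x^2)/2 := by
      unfold wfun; field_simp; try ring
    have step2 : x*(1-x^2)/2 ≤ x/2 := by nlinarith [mul_nonneg h0 (sq_nonneg x)]
    linarith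
  have := mul_le_mul_of_nonneg_left hwle hG
  nlinarith [this]

lemma gp_step (hd0 : 0 < d) (hcd : d ≤ c) (hc1 : c ≤ 1) (hcx : c ≤ x)
    (hx : x = 1 ∨ x ≤ 1 - d) :
    gp d c x - 1 ≤ (gp d c (stepf d x 1) + gp d c (stepf d x (-1)))/2 := by
  have hx0 : x ≠ 0 := by intro h; rw [h] at hcx; linarith
  rcases hx with rfl | hxle
  · rw [stepf, if_neg hx0, if_pos rfl, stepf, if_neg hx0, if_pos rfl,
      gp_one hd0 hc1, gp_one_sub hd0 hc1]
    linarith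
  · have hx1 : x ≠ 1 := by intro h; rw [h] at hxle; linarith
    rw [stepf, if_neg hx0, if_neg hx1, stepf, if_neg hx0, if_neg hx1]
    rw [mul_one, mul_neg_one, ← sub_eq_add_neg]
    exact gp_avg (ne_of_gt hd0)

end PsiLemmas

section Measury

variable {Ω : Type} [MeasurableSpace Ω] {P : Measure Ω} [IsProbabilityMeasure P]
  {ξ : ℕ → Ω → ℝ} {d v : ℝ} {m : ℕ}

lemma measurable_stepf_pair (d : ℝ) : Measurable (fun p : ℝ × ℝ => stepf d p.1 p.2) := by
  unfold stepf
  apply Measurable.ite (measurableSet_eq_fun measurable_fst measurable_const) measurable_const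
  apply Measurable.ite (measurableSet_eq_fun measurable_fst measurable_const) measurable_const
  exact measurable_fst.add (measurable_const.mul measurable_snd)

lemma measurable_walk (hmeas : ∀ i, Measurable (ξ i)) (t : ℕ) :
    Measurable (walk d ξ v t) := by
  induction t with
  | zero => exact measurable_const
  | succ t ih =>
      have : walk d ξ v (t+1) = fun ω => stepf d (walk d ξ v t ω) (ξ t ω) := rfl
      rw [this]
      exact (measurable_stepf_pair d).comp (ih.prodMk (hmeas t))

def wVec (d v : ℝ) : (m : ℕ) → (Fin m → ℝ) → ℝ
  | 0, _ => v
  | (m+1), y => stepf d (wVec d v m (fun i => y i.castSucc)) (y (Fin.last m))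

lemma measurable_wVec (d v : ℝ) (m : ℕ) : Measurable (wVec d v m) := by
  induction m with
  | zero => exact measurable_const
  | succ m ih =>
      have he : wVec d v (m+1)
          = fun y => stepf d (wVec d v m (fun i => y i.castSucc)) (y (Fin.last m)) := rfl
      rw [he]
      exact (measurable_stepf_pair d).comp
        ((ih.comp (measurable_pi_lambda _ (fun _ => measurable_pi_apply _))).prodMk
          (measurable_pi_apply _))

lemma walk_eq_wVec (ω : Ω) (t : ℕ) :
    walk d ξ v t ω = wVec d v t (fun i : Fin t => ξ i ω) := by
  induction t with
  | zero => rfl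
  | succ t ih => rw [walk_succ, wVec, ih]; rfl

lemma integral_coin (f : ℝ → ℝ) (hf : Measurable f) :
    ∫ z, f z ∂((1/2 : ENNReal) • Measure.dirac (1:ℝ) + (1/2 : ENNReal) • Measure.dirac (-1:ℝ))
      = (f 1 + f (-1))/2 := by
  have hint : ∀ a : ℝ, Integrable f ((1/2 : ENNReal) • Measure.dirac a) := by
    intro a
    refine ⟨hf.aestronglyMeasurable, ?_⟩
    unfold HasFiniteIntegral
    rw [lintegral_smul_measure, lintegral_dirac' _ hf.enorm]
    exact ENNReal.mul_lt_top (by norm_num) (by simp)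
  rw [integral_add_measure (hint 1) (hint (-1)), integral_smul_measure, integral_smul_measure,
    integral_dirac, integral_dirac]
  norm_num
  ring

lemma step_exp (hmeas : ∀ i, Measurable (ξ i))
    (hind : iIndepFun (m := fun _ => Real.measurableSpace) ξ P)
    (hlaw : ∀ i, Measure.map (ξ i) P
      = (1 / 2 : ENNReal) • Measure.dirac (1 : ℝ) + (1 / 2 : ENNReal) • Measure.dirac (-1 : ℝ))
    (m : ℕ) (Φ : ((Fin m → ℝ) × ℝ) → ℝ) (hΦ : Measurable Φ)
    (K : ℝ) (hK : ∀ p, ‖Φ p‖ ≤ K) :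
    ∫ ω, Φ (fun i : Fin m => ξ i ω, ξ m ω) ∂P
      = ∫ ω, (Φ (fun i : Fin m => ξ i ω, 1) + Φ (fun i : Fin m => ξ i ω, -1))/2 ∂P := by
  set Y : Ω → (Fin m → ℝ) := fun ω i => ξ i ω with hY
  have hYm : Measurable Y := measurable_pi_lambda _ (fun i => hmeas i)
  have hindep : IndepFun Y (ξ m) P := by
    have hd : Disjoint (Finset.range m) ({m} : Finset ℕ) := by
      simp [Finset.disjoint_left]
      omega
    have h := hind.indepFun_finset (Finset.range m) {m} hd hmeas
    have hφL : Measurable (fun g : ({x // x ∈ Finset.range m} → ℝ) =>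
        (fun i : Fin m => g ⟨i.1, Finset.mem_range.mpr i.2⟩)) :=
      measurable_pi_lambda _ (fun i => measurable_pi_apply _)
    have hφR : Measurable (fun g : ({x // x ∈ ({m} : Finset ℕ)} → ℝ) =>
        g ⟨m, Finset.mem_singleton_self m⟩) := measurable_pi_apply _
    exact h.comp hφL hφR
  have hmap : P.map (fun ω => (Y ω, ξ m ω)) = (P.map Y).prod (P.map (ξ m)) :=
    (indepFun_iff_map_prod_eq_prod_map_map hYm.aemeasurable (hmeas m).aemeasurable).mp hindep
  haveI : IsProbabilityMeasure (P.map Y) := Measure.isProbabilityMeasure_map hYm.aemeasurable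
  haveI : IsProbabilityMeasure (P.map (ξ m)) := Measure.isProbabilityMeasure_map (hmeas m).aemeasurable
  have hpair : Measurable (fun ω => (Y ω, ξ m ω)) := hYm.prodMk (hmeas m)
  have hIntProd : Integrable Φ ((P.map Y).prod (P.map (ξ m))) := by
    refine Integrable.mono' (integrable_const K) hΦ.aestronglyMeasurable ?_
    exact Filter.Eventually.of_forall hK
  calc ∫ ω, Φ (Y ω, ξ m ω) ∂P
      = ∫ p, Φ p ∂(P.map (fun ω => (Y ω, ξ m ω))) := by
        rw [integral_map hpair.aemeasurable hΦ.aestronglyMeasurable]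
    _ = ∫ p, Φ p ∂((P.map Y).prod (P.map (ξ m))) := by rw [hmap]
    _ = ∫ y, ∫ z, Φ (y, z) ∂(P.map (ξ m)) ∂(P.map Y) := integral_prod _ hIntProd
    _ = ∫ y, (Φ (y, 1) + Φ (y, -1))/2 ∂(P.map Y) := by
        apply integral_congr_ae
        apply Filter.Eventually.of_forall
        intro y
        rw [hlaw m]
        exact integral_coin _ (hΦ.comp measurable_prodMk_left)
    _ = ∫ ω, (Φ (Y ω, 1) + Φ (Y ω, -1))/2 ∂P := by
        rw [integral_map hYm.aemeasurable]
        apply Measurable.aestronglyMeasurable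
        exact ((hΦ.comp (measurable_id.prodMk measurable_const)).add
          (hΦ.comp (measurable_id.prodMk measurable_const))).div_const 2

lemma ae_coin (hmeas : ∀ i, Measurable (ξ i))
    (hlaw : ∀ i, Measure.map (ξ i) P
      = (1 / 2 : ENNReal) • Measure.dirac (1 : ℝ) + (1 / 2 : ENNReal) • Measure.dirac (-1 : ℝ)) :
    ∀ᵐ ω ∂P, ∀ i, ξ i ω = 1 ∨ ξ i ω = -1 := by
  rw [ae_all_iff]
  intro i
  have hs : MeasurableSet ({1, -1} : Set ℝ) := by
    exact (measurableSet_singleton _).union (measurableSet_singleton _)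
  have : P {ω | ¬(ξ i ω = 1 ∨ ξ i ω = -1)} = 0 := by
    have he : {ω | ¬(ξ i ω = 1 ∨ ξ i ω = -1)} = ξ i ⁻¹' ({1, -1} : Set ℝ)ᶜ := by
      ext ω; simp [Set.mem_preimage, Set.mem_compl_iff]
    rw [he, ← Measure.map_apply (hmeas i) hs.compl, hlaw i]
    rw [Measure.add_apply, Measure.smul_apply, Measure.smul_apply,
      Measure.dirac_apply' _ hs.compl, Measure.dirac_apply' _ hs.compl]
    simp
  exact this
  
lemma walk_mem_lattice {n : ℕ} (hn : 2 ≤ n) (hd : d = 1/n) (hv : v ∈ stateSpace n) {ω : Ω}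
    (hω : ∀ i, ξ i ω = 1 ∨ ξ i ω = -1) (t : ℕ) : walk d ξ v t ω ∈ stateSpace n := by
  induction t with
  | zero => exact hv
  | succ t ih => rw [walk_succ]; exact stepf_mem hn hd ih (hω t)

end Measury

section Main

variable {Ω : Type} [MeasurableSpace Ω] {P : Measure Ω} [IsProbabilityMeasure P]
  {ξ : ℕ → Ω → ℝ} {n : ℕ} {d c v : ℝ} {T₀ : ℕ}

def pad (m : ℕ) (y : Fin m → ℝ) : ℕ → ℝ := fun i => if h : i < m then y ⟨i, h⟩ else 0

lemma measurable_pad (m : ℕ) : Measurable (pad m) := by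
  apply measurable_pi_lambda
  intro i
  by_cases h : i < m
  · simp only [pad, dif_pos h]; exact measurable_pi_apply _
  · simp only [pad, dif_neg h]; exact measurable_const

def wSeq (d v : ℝ) : ℕ → (ℕ → ℝ) → ℝ
  | 0, _ => v
  | (t+1), y => stepf d (wSeq d v t y) (y t)

lemma measurable_wSeq (d v : ℝ) (t : ℕ) : Measurable (wSeq d v t) := by
  induction t with
  | zero => exact measurable_const
  | succ t ih =>
      have he : wSeq d v (t+1) = fun y => stepf d (wSeq d v t y) (y t) := rfl
      rw [he]
      exact (measurable_stepf_pair d).comp (ih.prodMk (measurable_pi_apply _))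

lemma wSeq_congr {y z : ℕ → ℝ} (t : ℕ) (h : ∀ i < t, y i = z i) :
    wSeq d v t y = wSeq d v t z := by
  induction t with
  | zero => rfl
  | succ t ih =>
      show stepf d (wSeq d v t y) (y t) = stepf d (wSeq d v t z) (z t)
      rw [ih (fun i hi => h i (Nat.lt_succ_of_lt hi)), h t (Nat.lt_succ_self t)]

lemma walk_eq_wSeq (ω : Ω) (t : ℕ) : walk d ξ v t ω = wSeq d v t (fun i => ξ i ω) := by
  induction t with
  | zero => rfl
  | succ t ih =>
      rw [walk_succ]
      show _ = stepf d (wSeq d v t fun i => ξ i ω) (ξ t ω)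
      rw [ih]

lemma walk_eq_pad (ω : Ω) {t m : ℕ} (h : t ≤ m) :
    wSeq d v t (pad m (fun j : Fin m => ξ j ω)) = walk d ξ v t ω := by
  rw [walk_eq_wSeq]
  apply wSeq_congr
  intro i hi
  simp only [pad, dif_pos (lt_of_lt_of_le hi h)]

lemma exp_step_walk (hmeas : ∀ i, Measurable (ξ i))
    (hind : iIndepFun (m := fun _ => Real.measurableSpace) ξ P)
    (hlaw : ∀ i, Measure.map (ξ i) P
      = (1 / 2 : ENNReal) • Measure.dirac (1 : ℝ) + (1 / 2 : ENNReal) • Measure.dirac (-1 : ℝ))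
    (t : ℕ) (W : (ℕ → ℝ) → ℝ) (hW : Measurable W) (hWb : ∀ y, |W y| ≤ 1)
    (hWdep : ∀ y z : ℕ → ℝ, (∀ i < t, y i = z i) → W y = W z)
    (F : ℝ → ℝ) (hF : Measurable F) (K : ℝ) (hK : ∀ x, ‖F x‖ ≤ K) :
    ∫ ω, W (fun i => ξ i ω) * F (walk d ξ v (t+1) ω) ∂P
      = ∫ ω, W (fun i => ξ i ω)
          * ((F (stepf d (walk d ξ v t ω) 1) + F (stepf d (walk d ξ v t ω) (-1)))/2) ∂P := by
  set Φ : ((Fin t → ℝ) × ℝ) → ℝ :=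
    fun p => W (pad t p.1) * F (stepf d (wSeq d v t (pad t p.1)) p.2) with hΦdef
  have hΦ : Measurable Φ := by
    apply Measurable.mul
    · exact hW.comp ((measurable_pad t).comp measurable_fst)
    · exact hF.comp ((measurable_stepf_pair d).comp
        (((measurable_wSeq d v t).comp ((measurable_pad t).comp measurable_fst)).prodMk
          measurable_snd))
  have hKb : ∀ p, ‖Φ p‖ ≤ K := by
    intro p
    rw [hΦdef]
    simp only [norm_mul]
    calc ‖W (pad t p.1)‖ * ‖F (stepf d (wSeq d v t (pad t p.1)) p.2)‖
        ≤ 1 * K := by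
          apply mul_le_mul (by rw [Real.norm_eq_abs]; exact hWb _) (hK _) (norm_nonneg _)
            zero_le_one
      _ = K := one_mul K
  have h := step_exp hmeas hind hlaw t Φ hΦ K hKb
  have hpadW : ∀ ω : Ω, W (pad t (fun i : Fin t => ξ i ω)) = W (fun i => ξ i ω) := by
    intro ω
    apply hWdep
    intro i hi
    simp only [pad, dif_pos hi]
  have hL : ∀ ω : Ω, Φ (fun i : Fin t => ξ i ω, ξ t ω)
      = W (fun i => ξ i ω) * F (walk d ξ v (t+1) ω) := by
    intro ω
    rw [hΦdef]
    simp only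
    rw [hpadW, walk_eq_pad ω (le_refl t), ← walk_succ]
  have hR : ∀ ω : Ω, (Φ (fun i : Fin t => ξ i ω, 1) + Φ (fun i : Fin t => ξ i ω, -1))/2
      = W (fun i => ξ i ω)
          * ((F (stepf d (walk d ξ v t ω) 1) + F (stepf d (walk d ξ v t ω) (-1)))/2) := by
    intro ω
    rw [hΦdef]
    simp only
    rw [hpadW, walk_eq_pad ω (le_refl t)]
    ring
  calc ∫ ω, W (fun i => ξ i ω) * F (walk d ξ v (t+1) ω) ∂P
      = ∫ ω, Φ (fun i : Fin t => ξ i ω, ξ t ω) ∂P := by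
        apply integral_congr_ae; exact Filter.Eventually.of_forall (fun ω => (hL ω).symm)
    _ = ∫ ω, (Φ (fun i : Fin t => ξ i ω, 1) + Φ (fun i : Fin t => ξ i ω, -1))/2 ∂P := h
    _ = _ := by
        apply integral_congr_ae; exact Filter.Eventually.of_forall (fun ω => hR ω)

end Main

section Bounds

variable {d c x : ℝ} {T₀ t : ℕ}

lemma continuous_Psic (d c : ℝ) (T₀ t : ℕ) : Continuous (fun x => Psic d c T₀ x t) := by
  unfold Psic Psi h1 h2 gp gfun wfun Gc rho clamp
  fun_prop

lemma continuous_gpc (d c : ℝ) : Continuous (gpc d c) := by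
  unfold gpc gp gfun clamp
  fun_prop

lemma Psic_nonneg : 0 ≤ Psic d c T₀ x t := le_trans (le_max_right _ _) (le_max_right _ _)

lemma gpc_nonneg : 0 ≤ gpc d c x := gp_nonneg

lemma gpc_le (hd0 : 0 < d) (hc1 : c ≤ 1) : gpc d c x ≤ gfun d c 1 := gp_le_g1 hd0 hc1

lemma Psic_le (hd0 : 0 < d) (hc1 : c ≤ 1) (hG : 0 ≤ Gc d c T₀) (ht : t ≤ T₀) :
    Psic d c T₀ x t ≤ Gc d c T₀ + gfun d c 1 := by
  have hy := clamp_mem_Icc (x := x)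
  set y := clamp x
  have hg1 := g_one_nonneg hd0 hc1
  have hρ := rho_pos (T₀ := T₀) hd0 ht
  apply max_le _ (max_le _ (by linarith))
  · have hw : 0 ≤ wfun d y := by
      unfold wfun
      apply div_nonneg _ (by positivity)
      nlinarith [hy.1, hy.2]
    have : y - wfun d y / rho d T₀ t ≤ 1 := by
      have : 0 ≤ wfun d y / rho d T₀ t := div_nonneg hw (le_of_lt hρ)
      linarith [hy.2]
    calc h1 d c T₀ y t ≤ Gc d c T₀ * 1 := mul_le_mul_of_nonneg_left this hG
    _ ≤ Gc d c T₀ + gfun d c 1 := by linarith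
  · have : gp d c y ≤ gfun d c 1 := gp_le_g1 hd0 hc1
    have h0T : (0:ℝ) ≤ (T₀:ℝ) - t := by
      have : (t:ℝ) ≤ T₀ := by exact_mod_cast ht
      linarith
    rw [h2]; linarith

end Bounds

section Pointwise

variable {n : ℕ} {d c x : ℝ} {T₀ t : ℕ}

lemma clamp_eq_of_mem (hn : 2 ≤ n) (hx : x ∈ stateSpace n) : clamp x = x :=
  clamp_eq (mem_nonneg hx) (mem_le_one hn hx)

lemma psic_step_pointwise (hn : 2 ≤ n) (hd : d = 1/n) (hdh : d ≤ 1/2) (hcd : d ≤ c)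
    (hc1 : c ≤ 1) (hG : 0 < Gc d c T₀) (ht : t < T₀) (hx : x ∈ stateSpace n) :
    Psic d c T₀ x t ≤ (Psic d c T₀ (stepf d x 1) (t+1) + Psic d c T₀ (stepf d x (-1)) (t+1))/2 := by
  have hd0 : 0 < d := by rw [hd]; positivity
  have hcx := clamp_eq_of_mem hn hx
  by_cases h0 : x = 0
  · subst h0
    have hs : stepf d 0 (1:ℝ) = 0 := by rw [stepf, if_pos rfl]
    have hs' : stepf d 0 (-1:ℝ) = 0 := by rw [stepf, if_pos rfl]
    simp only [Psic]
    rw [hs, hs', hcx]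
    rw [Psi_zero hd0 hc1 hcd (le_of_lt ht), Psi_zero hd0 hc1 hcd ht]
    norm_num
  by_cases h1 : x = 1
  · subst h1
    have hs : stepf d 1 (1:ℝ) = 1 - d := by rw [stepf, if_neg one_ne_zero, if_pos rfl]
    have hs' : stepf d 1 (-1:ℝ) = 1 - d := by rw [stepf, if_neg one_ne_zero, if_pos rfl]
    simp only [Psic]
    rw [hs, hs', hcx, clamp_eq (by linarith) (by linarith)]
    have := Psi_one (c := c) (T₀ := T₀) hd0 hc1 ht
    linarith
  · have hs : stepf d x (1:ℝ) = x + d := by rw [stepf, if_neg h0, if_neg h1, mul_one]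
    have hs' : stepf d x (-1:ℝ) = x - d := by
      rw [stepf, if_neg h0, if_neg h1, mul_neg_one, ← sub_eq_add_neg]
    simp only [Psic]
    rw [hs, hs', hcx,
      clamp_eq_of_mem hn (latAdd hn hd hx h1), clamp_eq_of_mem hn (latSub hn hd hx h0)]
    exact Psi_interior hd0 hG ht

lemma psic_terminal_pointwise (hn : 2 ≤ n) (hd : d = 1/n) (hdh : d ≤ 1/2)
    (hc1 : c ≤ 1) (hG : 0 ≤ Gc d c T₀) (hx : x ∈ stateSpace n) :
    Psic d c T₀ x T₀ ≤ gpc d c x := by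
  have hd0 : 0 < d := by rw [hd]; positivity
  simp only [Psic, gpc]
  rw [clamp_eq_of_mem hn hx]
  apply Psi_terminal hd0 hdh hc1 hG (mem_nonneg hx)
  by_cases h1 : x = 1
  · left; exact h1
  · right; exact mem_le hn hd hx h1

lemma gpc_step_pointwise (hn : 2 ≤ n) (hd : d = 1/n) (hcd : d ≤ c) (hc1 : c ≤ 1)
    (hcx : c ≤ x) (hx : x ∈ stateSpace n) :
    gpc d c x - 1 ≤ (gpc d c (stepf d x 1) + gpc d c (stepf d x (-1)))/2 := by
  have hd0 : 0 < d := by rw [hd]; positivity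
  have hx0 : x ≠ 0 := fun h => by rw [h] at hcx; linarith
  have hmem1 : stepf d x 1 ∈ stateSpace n := stepf_mem hn hd hx (Or.inl rfl)
  have hmem2 : stepf d x (-1) ∈ stateSpace n := stepf_mem hn hd hx (Or.inr rfl)
  simp only [gpc]
  rw [clamp_eq_of_mem hn hx, clamp_eq_of_mem hn hmem1, clamp_eq_of_mem hn hmem2]
  apply gp_step hd0 hcd hc1 hcx
  by_cases h1 : x = 1
  · left; exact h1
  · right; exact mem_le hn hd hx h1

end Pointwise

section Induction1

variable {Ω : Type} [MeasurableSpace Ω] {P : Measure Ω} [IsProbabilityMeasure P]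
  {ξ : ℕ → Ω → ℝ} {n : ℕ} {d c v : ℝ} {T₀ : ℕ}

lemma ind1 (hmeas : ∀ i, Measurable (ξ i))
    (hind : iIndepFun (m := fun _ => Real.measurableSpace) ξ P)
    (hlaw : ∀ i, Measure.map (ξ i) P
      = (1 / 2 : ENNReal) • Measure.dirac (1 : ℝ) + (1 / 2 : ENNReal) • Measure.dirac (-1 : ℝ))
    (hn : 2 ≤ n) (hd : d = 1/n) (hdh : d ≤ 1/2) (hcd : d ≤ c) (hc1 : c ≤ 1)
    (hG : 0 < Gc d c T₀) (hv : v ∈ stateSpace n) :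
    Psi d c T₀ v 0 ≤ ∫ ω, gpc d c (walk d ξ v T₀ ω) ∂P := by
  have hd0 : 0 < d := by rw [hd]; positivity
  have hg1 := g_one_nonneg hd0 hc1
  set KK := Gc d c T₀ + gfun d c 1 with hKK
  have hKK0 : 0 ≤ KK := by rw [hKK]; linarith [hG.le]
  have hwalkM : ∀ t, Measurable (walk d ξ v t) := measurable_walk hmeas
  have hItg : ∀ t, t ≤ T₀ → Integrable (fun ω => Psic d c T₀ (walk d ξ v t ω) t) P := by
    intro t ht
    refine Integrable.mono' (integrable_const KK)
      ((continuous_Psic d c T₀ t).measurable.comp (hwalkM t)).aestronglyMeasurable ?_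
    apply Filter.Eventually.of_forall; intro ω
    rw [Real.norm_eq_abs, abs_of_nonneg Psic_nonneg]
    exact Psic_le hd0 hc1 hG.le ht
  have hgood := ae_coin hmeas hlaw
  have key : ∀ t, t ≤ T₀ → Psi d c T₀ v 0 ≤ ∫ ω, Psic d c T₀ (walk d ξ v t ω) t ∂P := by
    intro t
    induction t with
    | zero =>
        intro _
        have he : (fun ω : Ω => Psic d c T₀ (walk d ξ v 0 ω) 0)
            = fun _ => Psi d c T₀ v 0 := by
          funext ω
          show Psic d c T₀ v 0 = _
          simp only [Psic]; rw [clamp_eq_of_mem hn hv]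
        rw [he, integral_const]
        simp
    | succ t ih =>
        intro ht
        have htT : t < T₀ := ht
        refine le_trans (ih (le_of_lt htT)) ?_
        have hFb : ∀ x : ℝ, ‖Psic d c T₀ x (t+1)‖ ≤ KK := by
          intro x
          rw [Real.norm_eq_abs, abs_of_nonneg Psic_nonneg]
          exact Psic_le hd0 hc1 hG.le ht
        have hstep := exp_step_walk (d := d) (v := v) hmeas hind hlaw t
          (fun _ => (1:ℝ)) measurable_const
          (fun y => by norm_num) (fun y z h => rfl)
          (fun x => Psic d c T₀ x (t+1)) (continuous_Psic d c T₀ (t+1)).measurable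
          KK hFb
        simp only [one_mul] at hstep
        rw [hstep]
        have hMavg : Measurable (fun ω =>
            (Psic d c T₀ (stepf d (walk d ξ v t ω) 1) (t+1)
              + Psic d c T₀ (stepf d (walk d ξ v t ω) (-1)) (t+1))/2) := by
          apply Measurable.div_const
          apply Measurable.add
          · exact (continuous_Psic d c T₀ (t+1)).measurable.comp
              ((measurable_stepf_pair d).comp ((hwalkM t).prodMk measurable_const))
          · exact (continuous_Psic d c T₀ (t+1)).measurable.comp
              ((measurable_stepf_pair d).comp ((hwalkM t).prodMk measurable_const))
        apply integral_mono_ae (hItg t htT.le)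
        · refine Integrable.mono' (integrable_const KK) hMavg.aestronglyMeasurable ?_
          apply Filter.Eventually.of_forall; intro ω
          have b1 := Psic_le (x := stepf d (walk d ξ v t ω) 1) hd0 hc1 hG.le (ht : t+1 ≤ T₀)
          have b2 := Psic_le (x := stepf d (walk d ξ v t ω) (-1)) hd0 hc1 hG.le (ht : t+1 ≤ T₀)
          have n1 := Psic_nonneg (d := d) (c := c) (T₀ := T₀)
            (x := stepf d (walk d ξ v t ω) 1) (t := t+1)
          have n2 := Psic_nonneg (d := d) (c := c) (T₀ := T₀)
            (x := stepf d (walk d ξ v t ω) (-1)) (t := t+1)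
          rw [Real.norm_eq_abs, abs_of_nonneg (by linarith)]
          linarith
        · filter_upwards [hgood] with ω hω
          exact psic_step_pointwise hn hd hdh hcd hc1 hG htT (walk_mem_lattice hn hd hv hω t)
  refine le_trans (key T₀ le_rfl) ?_
  apply integral_mono_ae (hItg T₀ le_rfl)
  · refine Integrable.mono' (integrable_const (gfun d c 1))
      ((continuous_gpc d c).measurable.comp (hwalkM T₀)).aestronglyMeasurable ?_
    apply Filter.Eventually.of_forall; intro ω
    rw [Real.norm_eq_abs, abs_of_nonneg gpc_nonneg]
    exact gpc_le hd0 hc1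
  · filter_upwards [hgood] with ω hω
    exact psic_terminal_pointwise hn hd hdh hc1 hG.le (walk_mem_lattice hn hd hv hω T₀)

end Induction1

def ASeq (d c v : ℝ) (T₀ : ℕ) (s : ℕ) : Set (ℕ → ℝ) := {y | ∀ s' < s, c ≤ wSeq d v (T₀ + s') y}

lemma measurable_ASeq (d c v : ℝ) (T₀ s : ℕ) : MeasurableSet (ASeq d c v T₀ s) := by
  have he : ASeq d c v T₀ s = ⋂ (s' : ℕ) (_ : s' < s), {y | c ≤ wSeq d v (T₀ + s') y} := by
    ext y; simp [ASeq]
  rw [he]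
  exact MeasurableSet.iInter fun s' => MeasurableSet.iInter fun _ =>
    measurableSet_le measurable_const (measurable_wSeq d v _)

section Induction2

variable {Ω : Type} [MeasurableSpace Ω] {P : Measure Ω} [IsProbabilityMeasure P]
  {ξ : ℕ → Ω → ℝ} {n : ℕ} {d c v : ℝ} {T₀ : ℕ}

lemma ind2 (hmeas : ∀ i, Measurable (ξ i))
    (hind : iIndepFun (m := fun _ => Real.measurableSpace) ξ P)
    (hlaw : ∀ i, Measure.map (ξ i) P
      = (1 / 2 : ENNReal) • Measure.dirac (1 : ℝ) + (1 / 2 : ENNReal) • Measure.dirac (-1 : ℝ))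
    (hn : 2 ≤ n) (hd : d = 1/n) (hdh : d ≤ 1/2) (hcd : d ≤ c) (hc1 : c ≤ 1)
    (hc : c ∈ stateSpace n) (hv : v ∈ stateSpace n) (S : ℕ) :
    (∫ ω, gpc d c (walk d ξ v T₀ ω) ∂P)
        - gfun d c 1 * (P ((fun ω (i : ℕ) => ξ i ω) ⁻¹' ASeq d c v T₀ S)).toReal
      ≤ ∑ s ∈ Finset.range S,
          (P ((fun ω (i : ℕ) => ξ i ω) ⁻¹' ASeq d c v T₀ (s+1))).toReal := by
  have hd0 : 0 < d := by rw [hd]; positivity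
  have hg1 := g_one_nonneg hd0 hc1
  have hwalkM : ∀ t, Measurable (walk d ξ v t) := measurable_walk hmeas
  have hgood := ae_coin hmeas hlaw
  set Aev : ℕ → Set Ω := fun s => (fun ω (i : ℕ) => ξ i ω) ⁻¹' ASeq d c v T₀ s with hAev
  have hAevM : ∀ s, MeasurableSet (Aev s) :=
    fun s => (measurable_pi_lambda _ hmeas) (measurable_ASeq d c v T₀ s)
  have hAmem : ∀ s (ω : Ω), ω ∈ Aev s ↔ ∀ s' < s, c ≤ walk d ξ v (T₀+s') ω := by
    intro s ω
    simp only [hAev, Set.mem_preimage, ASeq, Set.mem_setOf_eq]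
    constructor <;> intro h s' hs'
    · rw [walk_eq_wSeq]; exact h s' hs'
    · rw [← walk_eq_wSeq]; exact h s' hs'
  set Ind : ℕ → Ω → ℝ := fun s => (Aev s).indicator (fun _ => (1:ℝ)) with hInd
  have hIndM : ∀ s, Measurable (Ind s) :=
    fun s => measurable_const.indicator (hAevM s)
  have hInd01 : ∀ s ω, Ind s ω = 0 ∨ Ind s ω = 1 := by
    intro s ω
    by_cases h : ω ∈ Aev s
    · right; simp [hInd, Set.indicator_of_mem h]
    · left; simp [hInd, Set.indicator_of_notMem h]
  have hIndnn : ∀ s ω, 0 ≤ Ind s ω := by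
    intro s ω; rcases hInd01 s ω with h | h <;> rw [h] <;> norm_num
  have hIndle : ∀ s ω, Ind s ω ≤ 1 := by
    intro s ω; rcases hInd01 s ω with h | h <;> rw [h] <;> norm_num
  set q : ℕ → ℝ := fun s => (P (Aev s)).toReal with hq
  set a : ℕ → ℝ := fun s => ∫ ω, Ind s ω * gpc d c (walk d ξ v (T₀+s) ω) ∂P with ha
  have hqnn : ∀ s, 0 ≤ q s := fun s => ENNReal.toReal_nonneg
  have hgpcM : Measurable (gpc d c) := (continuous_gpc d c).measurable
  have hItg : ∀ s u, Integrable (fun ω => Ind s ω * gpc d c (walk d ξ v u ω)) P := by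
    intro s u
    refine Integrable.mono' (integrable_const (gfun d c 1))
      ((hIndM s).mul (hgpcM.comp (hwalkM u))).aestronglyMeasurable ?_
    apply Filter.Eventually.of_forall; intro ω
    rw [Real.norm_eq_abs, abs_of_nonneg (mul_nonneg (hIndnn s ω) gpc_nonneg)]
    calc Ind s ω * gpc d c (walk d ξ v u ω) ≤ 1 * gfun d c 1 :=
      mul_le_mul (hIndle s ω) (gpc_le hd0 hc1) gpc_nonneg zero_le_one
    _ = gfun d c 1 := one_mul _
  have hIndInt : ∀ s, Integrable (Ind s) P := by
    intro s
    refine Integrable.mono' (integrable_const 1) (hIndM s).aestronglyMeasurable ?_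
    apply Filter.Eventually.of_forall; intro ω
    rw [Real.norm_eq_abs, abs_of_nonneg (hIndnn s ω)]; exact hIndle s ω
  have hIndq : ∀ s, ∫ ω, Ind s ω ∂P = q s := by
    intro s
    rw [hInd]
    simp only
    rw [integral_indicator_const (1:ℝ) (hAevM s)]
    simp [hq, Measure.real]
  have hIndeq : ∀ s ω, Ind s ω
      = (ASeq d c v T₀ s).indicator (fun _ => (1:ℝ)) (fun i => ξ i ω) := by
    intro s ω
    rw [hInd]
    simp only
    by_cases h : ω ∈ Aev s
    · rw [Set.indicator_of_mem h, Set.indicator_of_mem (Set.mem_preimage.mp h)]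
    · rw [Set.indicator_of_notMem h,
        Set.indicator_of_notMem (fun hm => h (Set.mem_preimage.mpr hm))]
  -- the key step inequality
  have hstep : ∀ s, a s - q (s+1) ≤ a (s+1) := by
    intro s
    have hWb : ∀ y, |(ASeq d c v T₀ (s+1)).indicator (fun _ => (1:ℝ)) y| ≤ 1 := by
      intro y
      by_cases h : y ∈ ASeq d c v T₀ (s+1)
      · rw [Set.indicator_of_mem h]; norm_num
      · rw [Set.indicator_of_notMem h]; norm_num
    have hWdep : ∀ y z : ℕ → ℝ, (∀ i < T₀ + s, y i = z i) →
        (ASeq d c v T₀ (s+1)).indicator (fun _ => (1:ℝ)) y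
          = (ASeq d c v T₀ (s+1)).indicator (fun _ => (1:ℝ)) z := by
      intro y z hyz
      have hmem : y ∈ ASeq d c v T₀ (s+1) ↔ z ∈ ASeq d c v T₀ (s+1) := by
        constructor <;> intro hm s' hs'
        · rw [← wSeq_congr (T₀ + s') (fun i hi => hyz i (by omega))]
          exact hm s' hs'
        · rw [wSeq_congr (T₀ + s') (fun i hi => hyz i (by omega))]
          exact hm s' hs'
      by_cases h : y ∈ ASeq d c v T₀ (s+1)
      · rw [Set.indicator_of_mem h, Set.indicator_of_mem (hmem.mp h)]
      · rw [Set.indicator_of_notMem h, Set.indicator_of_notMem (fun hz => h (hmem.mpr hz))]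
    have hgb : ∀ x, ‖gpc d c x‖ ≤ gfun d c 1 := by
      intro x
      rw [Real.norm_eq_abs, abs_of_nonneg gpc_nonneg]; exact gpc_le hd0 hc1
    have hW := exp_step_walk (d := d) (v := v) hmeas hind hlaw (T₀ + s)
      ((ASeq d c v T₀ (s+1)).indicator (fun _ => (1:ℝ)))
      (measurable_const.indicator (measurable_ASeq d c v T₀ (s+1))) hWb hWdep
      (gpc d c) hgpcM (gfun d c 1) hgb
    have hWL : (fun ω => (ASeq d c v T₀ (s+1)).indicator (fun _ => (1:ℝ)) (fun i => ξ i ω)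
        * gpc d c (walk d ξ v (T₀ + s + 1) ω))
        = fun ω => Ind (s+1) ω * gpc d c (walk d ξ v (T₀ + (s+1)) ω) := by
      funext ω; rw [← hIndeq, show T₀ + s + 1 = T₀ + (s+1) from rfl]
    have hWR : (fun ω => (ASeq d c v T₀ (s+1)).indicator (fun _ => (1:ℝ)) (fun i => ξ i ω)
        * ((gpc d c (stepf d (walk d ξ v (T₀ + s) ω) 1)
            + gpc d c (stepf d (walk d ξ v (T₀ + s) ω) (-1)))/2))
        = fun ω => Ind (s+1) ω * ((gpc d c (stepf d (walk d ξ v (T₀ + s) ω) 1)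
            + gpc d c (stepf d (walk d ξ v (T₀ + s) ω) (-1)))/2) := by
      funext ω; rw [← hIndeq]
    rw [hWL, hWR] at hW
    -- a (s+1) equals the averaged integral
    have step1 : a (s+1) = ∫ ω, Ind (s+1) ω * ((gpc d c (stepf d (walk d ξ v (T₀ + s) ω) 1)
        + gpc d c (stepf d (walk d ξ v (T₀ + s) ω) (-1)))/2) ∂P := hW
    -- lower bound the average pointwise a.e.
    have hmono : ∫ ω, Ind (s+1) ω * (gpc d c (walk d ξ v (T₀ + s) ω) - 1) ∂P
        ≤ ∫ ω, Ind (s+1) ω * ((gpc d c (stepf d (walk d ξ v (T₀ + s) ω) 1)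
            + gpc d c (stepf d (walk d ξ v (T₀ + s) ω) (-1)))/2) ∂P := by
      apply integral_mono_ae
      · have : (fun ω => Ind (s+1) ω * (gpc d c (walk d ξ v (T₀ + s) ω) - 1))
            = fun ω => Ind (s+1) ω * gpc d c (walk d ξ v (T₀ + s) ω) - Ind (s+1) ω := by
          funext ω; ring
        rw [this]
        exact (hItg (s+1) (T₀ + s)).sub (hIndInt (s+1))
      · refine Integrable.mono' (integrable_const (gfun d c 1)) ?_ ?_
        · exact ((hIndM (s+1)).mul (((hgpcM.comp ((measurable_stepf_pair d).comp
            ((hwalkM (T₀+s)).prodMk measurable_const))).add (hgpcM.comp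
            ((measurable_stepf_pair d).comp ((hwalkM (T₀+s)).prodMk
              measurable_const)))).div_const 2)).aestronglyMeasurable
        · apply Filter.Eventually.of_forall; intro ω
          have b1 := gpc_le (x := stepf d (walk d ξ v (T₀+s) ω) 1) hd0 hc1
          have b2 := gpc_le (x := stepf d (walk d ξ v (T₀+s) ω) (-1)) hd0 hc1
          have n1 := gpc_nonneg (d := d) (c := c) (x := stepf d (walk d ξ v (T₀+s) ω) 1)
          have n2 := gpc_nonneg (d := d) (c := c) (x := stepf d (walk d ξ v (T₀+s) ω) (-1))
          have hi1 := hIndnn (s+1) ω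
          have hi2 := hIndle (s+1) ω
          rw [Real.norm_eq_abs, abs_of_nonneg (by positivity)]
          nlinarith
      · filter_upwards [hgood] with ω hω
        rcases hInd01 (s+1) ω with h | h
        · rw [h]; simp
        · rw [h, one_mul, one_mul]
          have hmem : ω ∈ Aev (s+1) := by
            by_contra hmm
            rw [hInd] at h
            simp only [Set.indicator_of_notMem hmm] at h
            norm_num at h
          have hcx : c ≤ walk d ξ v (T₀ + s) ω :=
            (hAmem (s+1) ω).mp hmem s (Nat.lt_succ_self s)
          have := gpc_step_pointwise hn hd hcd hc1 hcx (walk_mem_lattice hn hd hv hω (T₀+s))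
          linarith
    -- identify lower integral with a s - q (s+1)
    have hsplit : ∫ ω, Ind (s+1) ω * (gpc d c (walk d ξ v (T₀ + s) ω) - 1) ∂P
        = (∫ ω, Ind (s+1) ω * gpc d c (walk d ξ v (T₀ + s) ω) ∂P) - q (s+1) := by
      have : (fun ω => Ind (s+1) ω * (gpc d c (walk d ξ v (T₀ + s) ω) - 1))
          = fun ω => Ind (s+1) ω * gpc d c (walk d ξ v (T₀ + s) ω) - Ind (s+1) ω := by
        funext ω; ring
      rw [this, integral_sub (hItg (s+1) (T₀+s)) (hIndInt (s+1)), hIndq]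
    have hdrop : ∫ ω, Ind (s+1) ω * gpc d c (walk d ξ v (T₀ + s) ω) ∂P = a s := by
      apply integral_congr_ae
      filter_upwards [hgood] with ω hω
      rcases hInd01 (s+1) ω with h | h
      · -- indicator (s+1) is 0
        rw [h, zero_mul]
        rcases hInd01 s ω with h' | h'
        · rw [h', zero_mul]
        · -- in Aev s but not Aev (s+1): walk at time T₀+s is below c
          rw [h', one_mul]
          have hmem : ω ∈ Aev s := by
            by_contra hmm
            rw [hInd] at h'
            simp only [Set.indicator_of_notMem hmm] at h'
            norm_num at h'
          have hnmem : ω ∉ Aev (s+1) := by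
            intro hmm
            rw [hInd] at h
            simp only [Set.indicator_of_mem hmm] at h
            norm_num at h
          have hlt : walk d ξ v (T₀ + s) ω < c := by
            by_contra hge
            push_neg at hge
            refine hnmem ((hAmem (s+1) ω).mpr (fun s' hs' => ?_))
            rcases Nat.lt_succ_iff_lt_or_eq.mp hs' with h1 | h1
            · exact (hAmem s ω).mp hmem s' h1
            · subst h1; exact hge
          have hle : walk d ξ v (T₀ + s) ω ≤ c - d := by
            have := mem_lt_mem hn hd (walk_mem_lattice hn hd hv hω (T₀+s)) hc hlt
            linarith
          symm
          simp only [gpc]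
          rw [clamp_eq (mem_nonneg (walk_mem_lattice hn hd hv hω (T₀+s)))
            (mem_le_one hn (walk_mem_lattice hn hd hv hω (T₀+s)))]
          exact gp_zero_of_le hd0 hc1 hle
      · -- indicator (s+1) is 1, hence also Ind s = 1
        rw [h, one_mul]
        have hmem : ω ∈ Aev (s+1) := by
          by_contra hmm
          rw [hInd] at h
          simp only [Set.indicator_of_notMem hmm] at h
          norm_num at h
        have hmem' : ω ∈ Aev s := (hAmem s ω).mpr
          (fun s' hs' => (hAmem (s+1) ω).mp hmem s' (Nat.lt_succ_of_lt hs'))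
        rw [hInd]
        simp only [Set.indicator_of_mem hmem', one_mul]
    rw [step1]
    calc a s - q (s+1) = ∫ ω, Ind (s+1) ω * (gpc d c (walk d ξ v (T₀ + s) ω) - 1) ∂P := by
          rw [hsplit, hdrop]
      _ ≤ _ := hmono
  -- a 0 is the full integral
  have ha0 : a 0 = ∫ ω, gpc d c (walk d ξ v T₀ ω) ∂P := by
    rw [ha]
    simp only
    apply integral_congr_ae
    apply Filter.Eventually.of_forall
    intro ω
    have hmem : ω ∈ Aev 0 := fun s' hs' => absurd hs' (Nat.not_lt_zero s')
    rw [hInd]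
    simp only [Set.indicator_of_mem hmem, one_mul]
    rw [show T₀ + 0 = T₀ from rfl]
  -- upper bound for a S
  have haUB : ∀ s, a s ≤ gfun d c 1 * q s := by
    intro s
    rw [ha, ← hIndq s]
    simp only
    rw [← integral_const_mul]
    apply integral_mono_ae (hItg s (T₀+s))
    · exact (hIndInt s).const_mul _
    · apply Filter.Eventually.of_forall; intro ω
      calc Ind s ω * gpc d c (walk d ξ v (T₀+s) ω) ≤ Ind s ω * gfun d c 1 :=
            mul_le_mul_of_nonneg_left (gpc_le hd0 hc1) (hIndnn s ω)
        _ = gfun d c 1 * Ind s ω := mul_comm _ _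
  -- telescope
  have htel : ∀ S, a 0 - ∑ s ∈ Finset.range S, q (s+1) ≤ a S := by
    intro S
    induction S with
    | zero => simp
    | succ S ih =>
        rw [Finset.sum_range_succ]
        have := hstep S
        linarith
  have h1' := htel S
  have h2' := haUB S
  rw [ha0] at h1'
  linarith

end Induction2

section Tail

variable {Ω : Type} [MeasurableSpace Ω] {P : Measure Ω} [IsProbabilityMeasure P]
  {ξ : ℕ → Ω → ℝ} {n : ℕ} {d c v : ℝ} {T₀ : ℕ}

lemma block_forces_zero (hn : 2 ≤ n) (hd : d = 1/n) (hv : v ∈ stateSpace n) {ω : Ω}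
    (hω : ∀ i, ξ i ω = 1 ∨ ξ i ω = -1) (b : ℕ) (hb : ∀ i < n, ξ (b+i) ω = -1) :
    walk d ξ v (b+n) ω = 0 := by
  have hd0 : 0 < d := by rw [hd]; positivity
  have key : ∀ i ≤ n, walk d ξ v (b+i) ω = 0 ∨ walk d ξ v (b+i) ω ≤ 1 - i * d := by
    intro i
    induction i with
    | zero =>
        intro _
        right
        simpa using mem_le_one hn (walk_mem_lattice hn hd hv hω b)
    | succ i ih =>
        intro hin
        have hii := ih (by omega)
        rcases hii with h0 | hle
        · left
          rw [show b + (i+1) = (b+i) + 1 from rfl, walk_succ, h0, stepf, if_pos rfl]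
        · set x := walk d ξ v (b+i) ω with hx
          by_cases hx0 : x = 0
          · left
            rw [show b + (i+1) = (b+i) + 1 from rfl, walk_succ, ← hx, hx0, stepf, if_pos rfl]
          · right
            rw [show b + (i+1) = (b+i) + 1 from rfl, walk_succ, ← hx]
            by_cases hx1 : x = 1
            · rw [stepf, if_neg hx0, if_pos hx1]
              have : (i:ℝ) * d ≤ 0 := by rw [hx1] at hle; linarith
              push_cast
              linarith
            · rw [stepf, if_neg hx0, if_neg hx1, hb i (by omega)]
              push_cast
              linarith
  rcases key n le_rfl with h0 | hle
  · exact h0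
  · have hnd : (n:ℝ) * d = 1 := by
      rw [hd]; field_simp
    have hmem := walk_mem_lattice hn hd hv hω (b+n)
    have := mem_nonneg hmem
    rw [hnd] at hle
    linarith

lemma P_xi_neg_one (hmeas : ∀ i, Measurable (ξ i))
    (hlaw : ∀ i, Measure.map (ξ i) P
      = (1 / 2 : ENNReal) • Measure.dirac (1 : ℝ) + (1 / 2 : ENNReal) • Measure.dirac (-1 : ℝ))
    (l : ℕ) : P (ξ l ⁻¹' {(-1:ℝ)}) = 1/2 := by
  rw [← Measure.map_apply (hmeas l) (measurableSet_singleton _), hlaw l]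
  rw [Measure.add_apply, Measure.smul_apply, Measure.smul_apply,
    Measure.dirac_apply' _ (measurableSet_singleton _),
    Measure.dirac_apply' _ (measurableSet_singleton _)]
  rw [Set.indicator_of_notMem (by norm_num : (1:ℝ) ∉ ({-1} : Set ℝ)),
    Set.indicator_of_mem (by norm_num : (-1:ℝ) ∈ ({-1} : Set ℝ))]
  simp

lemma P_block (hmeas : ∀ i, Measurable (ξ i))
    (hind : iIndepFun (m := fun _ => Real.measurableSpace) ξ P)
    (hlaw : ∀ i, Measure.map (ξ i) P
      = (1 / 2 : ENNReal) • Measure.dirac (1 : ℝ) + (1 / 2 : ENNReal) • Measure.dirac (-1 : ℝ))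
    (M : ℕ) :
    P (⋂ l ∈ Finset.Ico M (M+n), ξ l ⁻¹' {(-1:ℝ)}) = (1/2 : ENNReal)^n := by
  rw [hind.meas_biInter (fun l _ => ⟨{(-1:ℝ)}, measurableSet_singleton _, rfl⟩)]
  rw [Finset.prod_congr rfl (fun l _ => P_xi_neg_one hmeas hlaw l)]
  rw [Finset.prod_const, Nat.card_Ico]
  congr 1
  omega

end Tail

section Decay

variable {Ω : Type} [MeasurableSpace Ω] {P : Measure Ω} [IsProbabilityMeasure P]
  {ξ : ℕ → Ω → ℝ} {n : ℕ} {d c v : ℝ} {T₀ : ℕ}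

lemma q_antitone (hmeas : ∀ i, Measurable (ξ i)) {s s' : ℕ} (h : s ≤ s') :
    (P ((fun ω (i : ℕ) => ξ i ω) ⁻¹' ASeq d c v T₀ s')).toReal
      ≤ (P ((fun ω (i : ℕ) => ξ i ω) ⁻¹' ASeq d c v T₀ s)).toReal := by
  apply (ENNReal.toReal_le_toReal (measure_ne_top P _) (measure_ne_top P _)).mpr
  apply measure_mono
  intro ω hω s'' h''
  exact hω s'' (by omega)

lemma q_decay (hmeas : ∀ i, Measurable (ξ i))
    (hind : iIndepFun (m := fun _ => Real.measurableSpace) ξ P)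
    (hlaw : ∀ i, Measure.map (ξ i) P
      = (1 / 2 : ENNReal) • Measure.dirac (1 : ℝ) + (1 / 2 : ENNReal) • Measure.dirac (-1 : ℝ))
    (hn : 2 ≤ n) (hd : d = 1/n) (hc0 : 0 < c) (hv : v ∈ stateSpace n) :
    ∀ k : ℕ, (P ((fun ω (i : ℕ) => ξ i ω) ⁻¹' ASeq d c v T₀ (k*n+1))).toReal
      ≤ (1 - (1/2:ℝ)^n)^k := by
  set r : ℝ := 1 - (1/2:ℝ)^n with hr
  have hrpos : 0 ≤ r := by
    rw [hr]
    have : ((1:ℝ)/2)^n ≤ 1 := by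
      apply pow_le_one₀ <;> norm_num
    linarith
  intro k
  induction k with
  | zero =>
      simp only [Nat.zero_mul, Nat.zero_add, pow_zero]
      calc (P _).toReal ≤ (1 : ENNReal).toReal :=
            ENNReal.toReal_mono (by simp) prob_le_one
        _ = 1 := by simp
  | succ k ih =>
      set M := T₀ + k*n with hM
      set A : Set Ω := (fun ω (i : ℕ) => ξ i ω) ⁻¹' ASeq d c v T₀ (k*n+1) with hA
      set Cb : Set Ω := ⋂ l ∈ Finset.Ico M (M+n), ξ l ⁻¹' {(-1:ℝ)} with hCb
      have hCbM : MeasurableSet Cb :=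
        MeasurableSet.biInter (Set.to_countable _)
          (fun l _ => (hmeas l) (measurableSet_singleton _))
      have hAM : MeasurableSet A :=
        (measurable_pi_lambda _ hmeas) (measurable_ASeq d c v T₀ (k*n+1))
      -- independence: A is a function of coordinates < M, Cb of coordinates in [M, M+n)
      have hfact : P (A ∩ Cb) = P A * ((1/2:ENNReal))^n := by
        set YM : Ω → (ℕ → ℝ) := fun ω i => if i < M then ξ i ω else 0 with hYM
        set ZB : Ω → (Fin n → ℝ) := fun ω j => ξ (M + j) ω with hZB
        have hYMm : Measurable YM := by
          apply measurable_pi_lambda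
          intro i
          by_cases h : i < M
          · simpa [hYM, h] using hmeas i
          · simp [hYM, h]
        have hZBm : Measurable ZB :=
          measurable_pi_lambda _ (fun j => hmeas (M + j))
        have hIndep : IndepFun YM ZB P := by
          have hdisj : Disjoint (Finset.range M) (Finset.Ico M (M+n)) := by
            simp [Finset.disjoint_left, Finset.mem_Ico]
            omega
          have h := hind.indepFun_finset (Finset.range M) (Finset.Ico M (M+n)) hdisj hmeas
          have hφL : Measurable (fun g : ({x // x ∈ Finset.range M} → ℝ) =>
              (fun i : ℕ => if h : i < M then g ⟨i, Finset.mem_range.mpr h⟩ else 0)) := by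
            apply measurable_pi_lambda
            intro i
            by_cases h : i < M
            · simp only [dif_pos h]; exact measurable_pi_apply _
            · simp only [dif_neg h]; exact measurable_const
          have hφR : Measurable (fun g : ({x // x ∈ Finset.Ico M (M+n)} → ℝ) =>
              (fun j : Fin n => g ⟨M + j, by simp only [Finset.mem_Ico]; omega⟩)) :=
            measurable_pi_lambda _ (fun j => measurable_pi_apply _)
          have h2 := h.comp hφL hφR
          have e1 : ((fun g : ({x // x ∈ Finset.range M} → ℝ) =>
              (fun i : ℕ => if h : i < M then g ⟨i, Finset.mem_range.mpr h⟩ else 0))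
                ∘ (fun a (i : {x // x ∈ Finset.range M}) => ξ i a)) = YM := by
            funext a
            funext i
            by_cases h : i < M
            · simp [Function.comp, dif_pos h, hYM, if_pos h]
            · simp [Function.comp, dif_neg h, hYM, if_neg h]
          have e2 : ((fun g : ({x // x ∈ Finset.Ico M (M+n)} → ℝ) =>
              (fun j : Fin n => g ⟨M + j, by simp only [Finset.mem_Ico]; omega⟩))
                ∘ (fun a (i : {x // x ∈ Finset.Ico M (M+n)}) => ξ i a)) = ZB := by
            funext a; funext j; rfl
          rwa [e1, e2] at h2
        have hAY : A = YM ⁻¹' (ASeq d c v T₀ (k*n+1)) := by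
          ext ω
          have hws : ∀ s' < k*n+1,
              wSeq d v (T₀ + s') (YM ω) = wSeq d v (T₀ + s') (fun i => ξ i ω) := by
            intro s' hs'
            apply wSeq_congr
            intro i hi
            simp only [hYM]
            rw [if_pos (show i < M by rw [hM]; omega)]
          simp only [hA, Set.mem_preimage, ASeq, Set.mem_setOf_eq]
          constructor <;> intro h s' hs'
          · rw [hws s' hs']
            exact h s' hs'
          · rw [← hws s' hs']
            exact h s' hs'
        have hSB : MeasurableSet {z : Fin n → ℝ | ∀ j, z j = -1} := by
          have : {z : Fin n → ℝ | ∀ j, z j = -1} = ⋂ j, (fun z : Fin n → ℝ => z j) ⁻¹' {-1} := by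
            ext z; simp
          rw [this]
          exact MeasurableSet.iInter (fun j => (measurable_pi_apply j) (measurableSet_singleton _))
        have hCbZ : Cb = ZB ⁻¹' {z : Fin n → ℝ | ∀ j, z j = -1} := by
          ext ω
          simp only [hCb, Set.mem_iInter, Set.mem_preimage, Set.mem_singleton_iff,
            Set.mem_setOf_eq, hZB, Finset.mem_Ico]
          constructor
          · intro h j
            exact h (M + j) ⟨by omega, by omega⟩
          · intro h l ⟨h1, h2⟩
            have : l = M + (⟨l - M, by omega⟩ : Fin n) := by simp; omega
            rw [this]
            exact h _
        have hPZB : P (ZB ⁻¹' {z : Fin n → ℝ | ∀ j, z j = -1}) = (1/2:ENNReal)^n := by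
          rw [← hCbZ]; exact P_block hmeas hind hlaw M
        rw [hAY, hCbZ,
          (indepFun_iff_measure_inter_preimage_eq_mul.mp hIndep) _ _
            (measurable_ASeq d c v T₀ (k*n+1)) hSB, hPZB]
      -- inclusion
      have hnull : P {ω | ¬ ∀ i, ξ i ω = 1 ∨ ξ i ω = -1} = 0 :=
        ae_iff.mp (ae_coin hmeas hlaw)
      have hsub : (fun ω (i : ℕ) => ξ i ω) ⁻¹' ASeq d c v T₀ ((k+1)*n+1)
          ⊆ (A \ Cb) ∪ {ω | ¬ ∀ i, ξ i ω = 1 ∨ ξ i ω = -1} := by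
        intro ω hωmem
        have hkk : k*n + 1 ≤ (k+1)*n + 1 := by
          have h2 : (k+1)*n = k*n + n := by ring
          omega
        by_cases hg : ∀ i, ξ i ω = 1 ∨ ξ i ω = -1
        · left
          simp only [Set.mem_preimage, ASeq, Set.mem_setOf_eq] at hωmem
          have hmemw : ∀ s' < (k+1)*n+1, c ≤ walk d ξ v (T₀ + s') ω := by
            intro s' hs'
            have h' := hωmem s' hs'
            rwa [← walk_eq_wSeq] at h'
          constructor
          · show ω ∈ A
            intro s' hs'
            have h' := hmemw s' (by omega)
            rwa [walk_eq_wSeq] at h'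
          · intro hcb
            have hb : ∀ i < n, ξ (M + i) ω = -1 := by
              intro i hi
              rw [hCb] at hcb
              simp only [Set.mem_iInter] at hcb
              exact hcb (M + i) (by simp [Finset.mem_Ico]; omega)
            have hz := block_forces_zero hn hd hv hg M hb
            have hfin := hmemw ((k+1)*n) (by omega)
            rw [show T₀ + (k+1)*n = M + n by rw [hM]; ring] at hfin
            rw [hz] at hfin
            linarith
        · right; exact hg
      have hle1 : P ((fun ω (i : ℕ) => ξ i ω) ⁻¹' ASeq d c v T₀ ((k+1)*n+1)) ≤ P (A \ Cb) := by
        calc P _ ≤ P ((A \ Cb) ∪ {ω | ¬ ∀ i, ξ i ω = 1 ∨ ξ i ω = -1}) := measure_mono hsub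
          _ ≤ P (A \ Cb) + P {ω | ¬ ∀ i, ξ i ω = 1 ∨ ξ i ω = -1} := measure_union_le _ _
          _ = P (A \ Cb) := by rw [hnull, add_zero]
      -- split A into the Cb part and the rest
      have hsplitm : P (A ∩ Cb) + P (A \ Cb) = P A := measure_inter_add_diff A hCbM
      have htr : (P (A ∩ Cb)).toReal + (P (A \ Cb)).toReal = (P A).toReal := by
        rw [← ENNReal.toReal_add (measure_ne_top P _) (measure_ne_top P _), hsplitm]
      have hABtr : (P (A ∩ Cb)).toReal = (P A).toReal * (1/2:ℝ)^n := by
        rw [hfact, ENNReal.toReal_mul, ENNReal.toReal_pow]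
        norm_num
      have hfin : (P (A \ Cb)).toReal = (P A).toReal * r := by
        rw [hr]; nlinarith [htr, hABtr]
      calc (P ((fun ω (i : ℕ) => ξ i ω) ⁻¹' ASeq d c v T₀ ((k+1)*n+1))).toReal
          ≤ (P (A \ Cb)).toReal :=
            (ENNReal.toReal_le_toReal (measure_ne_top P _) (measure_ne_top P _)).mpr hle1
        _ = (P A).toReal * r := hfin
        _ ≤ r^k * r := by
            apply mul_le_mul_of_nonneg_right _ hrpos
            exact ih
        _ = r^(k+1) := by ring

end Decay

section Summab

variable {Ω : Type} [MeasurableSpace Ω] {P : Measure Ω} [IsProbabilityMeasure P]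
  {ξ : ℕ → Ω → ℝ} {n : ℕ} {d c v : ℝ} {T₀ : ℕ}

lemma q_sum_bound (hmeas : ∀ i, Measurable (ξ i))
    (hind : iIndepFun (m := fun _ => Real.measurableSpace) ξ P)
    (hlaw : ∀ i, Measure.map (ξ i) P
      = (1 / 2 : ENNReal) • Measure.dirac (1 : ℝ) + (1 / 2 : ENNReal) • Measure.dirac (-1 : ℝ))
    (hn : 2 ≤ n) (hd : d = 1/n) (hc0 : 0 < c) (hv : v ∈ stateSpace n) :
    (∀ S : ℕ, ∑ s ∈ Finset.range S,
        (P ((fun ω (i : ℕ) => ξ i ω) ⁻¹' ASeq d c v T₀ (s+1))).toReal ≤ (n:ℝ) * 2^n) ∧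
    Filter.Tendsto (fun s => (P ((fun ω (i : ℕ) => ξ i ω) ⁻¹' ASeq d c v T₀ s)).toReal)
      Filter.atTop (nhds 0) := by
  set q : ℕ → ℝ := fun s => (P ((fun ω (i : ℕ) => ξ i ω) ⁻¹' ASeq d c v T₀ s)).toReal with hqdef
  set r : ℝ := 1 - (1/2:ℝ)^n with hr
  have hhalf : (0:ℝ) < (1/2:ℝ)^n := by positivity
  have hhalf1 : ((1:ℝ)/2)^n ≤ 1 := pow_le_one₀ (by norm_num) (by norm_num)
  have hr0 : 0 ≤ r := by rw [hr]; linarith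
  have hr1 : r < 1 := by rw [hr]; linarith
  have hqnn : ∀ s, 0 ≤ q s := fun s => ENNReal.toReal_nonneg
  have hmono : ∀ {s s' : ℕ}, s ≤ s' → q s' ≤ q s := fun h => q_antitone hmeas h
  have hdecay : ∀ k, q (k*n+1) ≤ r^k := q_decay hmeas hind hlaw hn hd hc0 hv
  have hgeom : ∀ S : ℕ, ∑ k ∈ Finset.range S, r^k ≤ 2^n := by
    intro S
    rw [geom_sum_eq (ne_of_lt hr1) S]
    have hrn : r - 1 < 0 := by linarith
    rw [div_le_iff_of_neg hrn]
    have h2 : (2:ℝ)^n * (1/2)^n = 1 := by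
      rw [← mul_pow]; norm_num
    have hrS : 0 ≤ r^S := pow_nonneg hr0 S
    have h3 : (2:ℝ)^n * (r - 1) = -1 := by
      rw [hr]; linear_combination (-1:ℝ) * h2
    linarith
  have hpartial : ∀ S : ℕ, ∑ s ∈ Finset.range S, q (s+1) ≤ (n:ℝ) * 2^n := by
    have hgrow : ∀ K : ℕ, ∑ s ∈ Finset.range (n*K), q (s+1)
        ≤ ∑ k ∈ Finset.range K, (n:ℝ) * r^k := by
      intro K
      induction K with
      | zero => simp
      | succ K ih =>
          rw [show n*(K+1) = n*K + n by ring, Finset.sum_range_add, Finset.sum_range_succ]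
          have hblock : ∑ i ∈ Finset.range n, q (n*K + i + 1) ≤ (n:ℝ) * r^K := by
            have hterm : ∀ i ∈ Finset.range n, q (n*K + i + 1) ≤ r^K := by
              intro i _
              calc q (n*K + i + 1) ≤ q (K*n + 1) := hmono (by rw [Nat.mul_comm K n]; omega)
                _ ≤ r^K := hdecay K
            calc ∑ i ∈ Finset.range n, q (n*K + i + 1) ≤ ∑ _i ∈ Finset.range n, r^K :=
                  Finset.sum_le_sum hterm
              _ = (n:ℝ) * r^K := by rw [Finset.sum_const, Finset.card_range, nsmul_eq_mul]
          linarith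
    intro S
    have hsub : ∑ s ∈ Finset.range S, q (s+1) ≤ ∑ s ∈ Finset.range (n*S), q (s+1) := by
      apply Finset.sum_le_sum_of_subset_of_nonneg
      · apply Finset.range_subset_range.mpr
        calc S = 1*S := (one_mul S).symm
          _ ≤ n*S := Nat.mul_le_mul_right S (by omega)
      · intro i _ _; exact hqnn _
    calc ∑ s ∈ Finset.range S, q (s+1) ≤ ∑ s ∈ Finset.range (n*S), q (s+1) := hsub
      _ ≤ ∑ k ∈ Finset.range S, (n:ℝ) * r^k := hgrow S
      _ = (n:ℝ) * ∑ k ∈ Finset.range S, r^k := by rw [Finset.mul_sum]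
      _ ≤ (n:ℝ) * 2^n := by
          apply mul_le_mul_of_nonneg_left (hgeom S) (by positivity)
  constructor
  · exact hpartial
  · have hsummable : Summable (fun s => q (s+1)) :=
      summable_of_sum_range_le (fun s => hqnn _) hpartial
    have := hsummable.tendsto_atTop_zero
    exact (Filter.tendsto_add_atTop_iff_nat 1).mp this

end Summab

section TPrime

variable {Ω : Type} [MeasurableSpace Ω] {P : Measure Ω} [IsProbabilityMeasure P]
  {ξ : ℕ → Ω → ℝ} {n : ℕ} {d c v : ℝ} {T₀ : ℕ}

lemma measurable_sInf_set {pred : ℕ → Ω → Prop} (hp : ∀ s, MeasurableSet {ω | pred s ω}) :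
    Measurable (fun ω => sInf {s | pred s ω}) := by
  apply measurable_to_countable'
  intro k
  by_cases hk : k = 0
  · subst hk
    have hset : (fun ω => sInf {s | pred s ω}) ⁻¹' {0}
        = {ω | pred 0 ω} ∪ ⋂ s, {ω | ¬ pred s ω} := by
      ext ω
      simp only [Set.mem_preimage, Set.mem_singleton_iff, Set.mem_union, Set.mem_iInter,
        Set.mem_setOf_eq]
      rw [Nat.sInf_eq_zero]
      constructor
      · rintro (h | h)
        · left; exact h
        · right; intro s hs
          have : s ∈ {s | pred s ω} := hs
          rw [h] at this
          exact this
      · rintro (h | h)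
        · left; exact h
        · right
          ext s
          simp only [Set.mem_setOf_eq, Set.mem_empty_iff_false, iff_false]
          exact h s
    rw [hset]
    exact ((hp 0).union (MeasurableSet.iInter (fun s => (hp s).compl)))
  · have hset : (fun ω => sInf {s | pred s ω}) ⁻¹' {k}
        = {ω | pred k ω} ∩ ⋂ j ∈ Finset.range k, {ω | ¬ pred j ω} := by
      ext ω
      simp only [Set.mem_preimage, Set.mem_singleton_iff, Set.mem_inter_iff, Set.mem_iInter,
        Set.mem_setOf_eq, Finset.mem_range]
      constructor
      · intro h
        have hne : {s | pred s ω}.Nonempty := by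
          by_contra hemp
          rw [Set.not_nonempty_iff_eq_empty] at hemp
          rw [hemp, Nat.sInf_empty] at h
          exact hk h.symm
        constructor
        · have := Nat.sInf_mem hne
          rwa [h] at this
        · intro j hj
          exact Nat.notMem_of_lt_sInf (h ▸ hj)
      · rintro ⟨h1, h2⟩
        apply le_antisymm (Nat.sInf_le h1)
        by_contra hlt
        push_neg at hlt
        have hmem := Nat.sInf_mem (⟨k, h1⟩ : {s | pred s ω}.Nonempty)
        exact h2 _ hlt hmem
    rw [hset]
    exact (hp k).inter (MeasurableSet.biInter (Set.to_countable _) (fun j _ => (hp j).compl))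

lemma mem_Aev_iff {s : ℕ} {ω : Ω} :
    ω ∈ ((fun ω (i : ℕ) => ξ i ω) ⁻¹' ASeq d c v T₀ s)
      ↔ ∀ s' < s, c ≤ walk d ξ v (T₀+s') ω := by
  simp only [Set.mem_preimage, ASeq, Set.mem_setOf_eq]
  constructor <;> intro h s' hs'
  · rw [walk_eq_wSeq]; exact h s' hs'
  · rw [← walk_eq_wSeq]; exact h s' hs'

end TPrime

section MainCase

variable {Ω : Type} [MeasurableSpace Ω] {P : Measure Ω} [IsProbabilityMeasure P]
  {ξ : ℕ → Ω → ℝ} {n : ℕ} {d c v : ℝ} {T₀ : ℕ}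

lemma main_case (hmeas : ∀ i, Measurable (ξ i))
    (hind : iIndepFun (m := fun _ => Real.measurableSpace) ξ P)
    (hlaw : ∀ i, Measure.map (ξ i) P
      = (1 / 2 : ENNReal) • Measure.dirac (1 : ℝ) + (1 / 2 : ENNReal) • Measure.dirac (-1 : ℝ))
    (hn : 2 ≤ n) (hd : d = 1/n) (hc : c ∈ stateSpace n) (hc0 : c ≠ 0)
    (hc23 : 2/3 < (1-c)^2) (hT₀l : 2/(3*d^2) ≤ (T₀:ℝ)) (hT₀u : (T₀:ℝ) < 2/(3*d^2)+1)
    (hv : v ∈ stateSpace n) :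
    (v/2) * (((1-c)^2 - 2/3)/d^2 - 1)
      ≤ ∫ ω, ((sInf {s : ℕ | walk d ξ v (T₀+s) ω < c} : ℕ) : ℝ) ∂P := by
  have hd0 : 0 < d := by rw [hd]; positivity
  have hdh : d ≤ 1/2 := by
    rw [hd]
    apply one_div_le_one_div_of_le (by norm_num)
    exact_mod_cast hn
  have hcd : d ≤ c := mem_ge hn hd hc hc0
  have hcpos : 0 < c := lt_of_lt_of_le hd0 hcd
  have hc1 : c ≤ 1 := mem_le_one hn hc
  have hv0 := mem_nonneg hv
  have hv1 := mem_le_one hn hv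
  have hG : 0 < Gc d c T₀ := Gc_pos hd0 hc1 hc23 hT₀u
  have hGlb := Gc_lb (T₀ := T₀) hd0 hc1 hT₀u
  have hg1 := g_one_nonneg hd0 hc1
  obtain ⟨hpart, htend⟩ := q_sum_bound (T₀ := T₀) hmeas hind hlaw hn hd hcpos hv
  have hA1 : Psi d c T₀ v 0 ≤ ∫ ω, gpc d c (walk d ξ v T₀ ω) ∂P :=
    ind1 hmeas hind hlaw hn hd hdh hcd hc1 hG hv
  have hA2 := ind2 (T₀ := T₀) hmeas hind hlaw hn hd hdh hcd hc1 hc hv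
  have hIndM : ∀ s, MeasurableSet ((fun ω (i : ℕ) => ξ i ω) ⁻¹' ASeq d c v T₀ s) :=
    fun s => (measurable_pi_lambda _ hmeas) (measurable_ASeq d c v T₀ s)
  have hT'm : Measurable (fun ω => sInf {s | walk d ξ v (T₀+s) ω < c}) :=
    measurable_sInf_set (fun s => measurableSet_lt (measurable_walk hmeas _) measurable_const)
  -- a.e. the walk eventually goes below c
  have hNEsub : ∀ S, {ω | ¬ ∃ s, walk d ξ v (T₀+s) ω < c}
      ⊆ ((fun ω (i : ℕ) => ξ i ω) ⁻¹' ASeq d c v T₀ S) := by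
    intro S ω hω
    rw [Set.mem_setOf_eq, not_exists] at hω
    rw [mem_Aev_iff]
    intro s' _
    exact le_of_not_gt (hω s')
  have hNE0 : P {ω | ¬ ∃ s, walk d ξ v (T₀+s) ω < c} = 0 := by
    have hb : ∀ S, (P {ω | ¬ ∃ s, walk d ξ v (T₀+s) ω < c}).toReal
        ≤ (P ((fun ω (i : ℕ) => ξ i ω) ⁻¹' ASeq d c v T₀ S)).toReal := by
      intro S
      exact (ENNReal.toReal_le_toReal (measure_ne_top P _) (measure_ne_top P _)).mpr
        (measure_mono (hNEsub S))
    have h0 : (P {ω | ¬ ∃ s, walk d ξ v (T₀+s) ω < c}).toReal ≤ 0 :=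
      ge_of_tendsto htend (Filter.Eventually.of_forall hb)
    have h00 : (P {ω | ¬ ∃ s, walk d ξ v (T₀+s) ω < c}).toReal = 0 :=
      le_antisymm h0 ENNReal.toReal_nonneg
    rcases (ENNReal.toReal_eq_zero_iff _).mp h00 with h | h
    · exact h
    · exact absurd h (measure_ne_top P _)
  have hNEa : ∀ᵐ ω ∂P, ∃ s, walk d ξ v (T₀+s) ω < c := ae_iff.mpr hNE0
  -- relation between Aev and the hitting time
  have hf1 : ∀ ω, (∃ s, walk d ξ v (T₀+s) ω < c) → ∀ s : ℕ,
      (ω ∈ ((fun ω (i : ℕ) => ξ i ω) ⁻¹' ASeq d c v T₀ (s+1))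
        ↔ s < sInf {s | walk d ξ v (T₀+s) ω < c}) := by
    intro ω hne s
    rw [mem_Aev_iff]
    constructor
    · intro h
      by_contra hle
      push_neg at hle
      have hmem := Nat.sInf_mem (hne : {s | walk d ξ v (T₀+s) ω < c}.Nonempty)
      have h2 := h (sInf {s | walk d ξ v (T₀+s) ω < c}) (by omega)
      have hmem' : walk d ξ v (T₀ + sInf {s | walk d ξ v (T₀+s) ω < c}) ω < c := hmem
      linarith
    · intro h s' hs'
      have hlt : s' < sInf {s | walk d ξ v (T₀+s) ω < c} := by omega
      have hnm := Nat.notMem_of_lt_sInf hlt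
      have hnm' : ¬ walk d ξ v (T₀ + s') ω < c := hnm
      exact le_of_not_gt hnm'
  -- finiteness of the expected hitting time
  have hlb : ∫⁻ ω, ((sInf {s | walk d ξ v (T₀+s) ω < c} : ℕ) : ENNReal) ∂P
      ≤ ENNReal.ofReal ((n:ℝ) * 2^n) := by
    have hptb : ∀ᵐ ω ∂P, ((sInf {s | walk d ξ v (T₀+s) ω < c} : ℕ) : ENNReal)
        ≤ ∑' s : ℕ, ((fun ω (i : ℕ) => ξ i ω) ⁻¹' ASeq d c v T₀ (s+1)).indicator
            (fun _ => (1:ENNReal)) ω := by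
      filter_upwards [hNEa] with ω hne
      calc ((sInf {s | walk d ξ v (T₀+s) ω < c} : ℕ) : ENNReal)
          = ∑ s ∈ Finset.range (sInf {s | walk d ξ v (T₀+s) ω < c}), 1 := by simp
        _ ≤ ∑ s ∈ Finset.range (sInf {s | walk d ξ v (T₀+s) ω < c}),
            ((fun ω (i : ℕ) => ξ i ω) ⁻¹' ASeq d c v T₀ (s+1)).indicator
              (fun _ => (1:ENNReal)) ω := by
            apply Finset.sum_le_sum
            intro s hs
            rw [Set.indicator_of_mem ((hf1 ω hne s).mpr (Finset.mem_range.mp hs))]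
        _ ≤ _ := ENNReal.sum_le_tsum _
    calc ∫⁻ ω, ((sInf {s | walk d ξ v (T₀+s) ω < c} : ℕ) : ENNReal) ∂P
        ≤ ∫⁻ ω, ∑' s : ℕ, ((fun ω (i : ℕ) => ξ i ω) ⁻¹' ASeq d c v T₀ (s+1)).indicator
            (fun _ => (1:ENNReal)) ω ∂P := lintegral_mono_ae hptb
      _ = ∑' s : ℕ, ∫⁻ ω, ((fun ω (i : ℕ) => ξ i ω) ⁻¹' ASeq d c v T₀ (s+1)).indicator
            (fun _ => (1:ENNReal)) ω ∂P :=
          lintegral_tsum (fun s => (measurable_const.indicator (hIndM (s+1))).aemeasurable)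
      _ = ∑' s : ℕ, P ((fun ω (i : ℕ) => ξ i ω) ⁻¹' ASeq d c v T₀ (s+1)) := by
          congr 1
          funext s
          rw [lintegral_indicator (hIndM (s+1))]
          simp
      _ ≤ ENNReal.ofReal ((n:ℝ) * 2^n) := by
          rw [ENNReal.tsum_eq_iSup_sum]
          apply iSup_le
          intro F
          obtain ⟨S, hS⟩ := F.exists_nat_subset_range
          calc ∑ s ∈ F, P ((fun ω (i : ℕ) => ξ i ω) ⁻¹' ASeq d c v T₀ (s+1))
              ≤ ∑ s ∈ Finset.range S, P ((fun ω (i : ℕ) => ξ i ω) ⁻¹' ASeq d c v T₀ (s+1)) :=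
                Finset.sum_le_sum_of_subset hS
            _ = ENNReal.ofReal (∑ s ∈ Finset.range S,
                (P ((fun ω (i : ℕ) => ξ i ω) ⁻¹' ASeq d c v T₀ (s+1))).toReal) := by
                rw [ENNReal.ofReal_sum_of_nonneg (fun s _ => ENNReal.toReal_nonneg)]
                exact Finset.sum_congr rfl (fun s _ => (ENNReal.ofReal_toReal
                  (measure_ne_top P _)).symm)
            _ ≤ ENNReal.ofReal ((n:ℝ) * 2^n) := ENNReal.ofReal_le_ofReal (hpart S)
  have hTint : Integrable (fun ω => ((sInf {s | walk d ξ v (T₀+s) ω < c} : ℕ) : ℝ)) P := by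
    constructor
    · exact (measurable_from_top.comp hT'm).aestronglyMeasurable
    · unfold HasFiniteIntegral
      have he : ∀ ω : Ω, (‖((sInf {s | walk d ξ v (T₀+s) ω < c} : ℕ) : ℝ)‖₊ : ENNReal)
          = ((sInf {s | walk d ξ v (T₀+s) ω < c} : ℕ) : ENNReal) := by
        intro ω
        simp
      calc ∫⁻ ω, (‖((sInf {s | walk d ξ v (T₀+s) ω < c} : ℕ) : ℝ)‖₊ : ENNReal) ∂P
          = ∫⁻ ω, ((sInf {s | walk d ξ v (T₀+s) ω < c} : ℕ) : ENNReal) ∂P :=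
            lintegral_congr he
        _ ≤ ENNReal.ofReal ((n:ℝ) * 2^n) := hlb
        _ < ⊤ := ENNReal.ofReal_lt_top
  -- partial sums are below the expectation
  have hsum_le : ∀ S, ∑ s ∈ Finset.range S,
      (P ((fun ω (i : ℕ) => ξ i ω) ⁻¹' ASeq d c v T₀ (s+1))).toReal
        ≤ ∫ ω, ((sInf {s | walk d ξ v (T₀+s) ω < c} : ℕ) : ℝ) ∂P := by
    intro S
    have hIndInt : ∀ s : ℕ, Integrable
        (((fun ω (i : ℕ) => ξ i ω) ⁻¹' ASeq d c v T₀ (s+1)).indicator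
          (fun _ => (1:ℝ))) P := by
      intro s
      refine Integrable.mono' (integrable_const 1)
        (measurable_const.indicator (hIndM (s+1))).aestronglyMeasurable ?_
      apply Filter.Eventually.of_forall
      intro ω
      by_cases h : ω ∈ ((fun ω (i : ℕ) => ξ i ω) ⁻¹' ASeq d c v T₀ (s+1))
      · rw [Set.indicator_of_mem h]; norm_num
      · rw [Set.indicator_of_notMem h]; norm_num
    have heq : ∑ s ∈ Finset.range S,
        (P ((fun ω (i : ℕ) => ξ i ω) ⁻¹' ASeq d c v T₀ (s+1))).toReal
        = ∫ ω, (∑ s ∈ Finset.range S,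
            ((fun ω (i : ℕ) => ξ i ω) ⁻¹' ASeq d c v T₀ (s+1)).indicator
              (fun _ => (1:ℝ)) ω) ∂P := by
      rw [integral_finset_sum _ (fun s _ => hIndInt s)]
      apply Finset.sum_congr rfl
      intro s _
      rw [integral_indicator_const (1:ℝ) (hIndM (s+1))]
      simp [Measure.real]
    rw [heq]
    apply integral_mono_ae (integrable_finset_sum _ (fun s _ => hIndInt s)) hTint
    filter_upwards [hNEa] with ω hne
    calc ∑ s ∈ Finset.range S,
        ((fun ω (i : ℕ) => ξ i ω) ⁻¹' ASeq d c v T₀ (s+1)).indicator (fun _ => (1:ℝ)) ω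
        ≤ ∑ s ∈ Finset.range S,
            (if s < sInf {s | walk d ξ v (T₀+s) ω < c} then (1:ℝ) else 0) := by
          apply Finset.sum_le_sum
          intro s _
          by_cases hmem : ω ∈ ((fun ω (i : ℕ) => ξ i ω) ⁻¹' ASeq d c v T₀ (s+1))
          · rw [Set.indicator_of_mem hmem, if_pos ((hf1 ω hne s).mp hmem)]
          · rw [Set.indicator_of_notMem hmem]
            split_ifs <;> norm_num
      _ ≤ ((sInf {s | walk d ξ v (T₀+s) ω < c} : ℕ) : ℝ) := by
          rw [Finset.sum_boole]
          have hfil : (Finset.range S).filter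
              (fun s => s < sInf {s | walk d ξ v (T₀+s) ω < c})
              = Finset.range (min S (sInf {s | walk d ξ v (T₀+s) ω < c})) := by
            ext j
            simp only [Finset.mem_filter, Finset.mem_range, lt_min_iff]
          rw [hfil, Finset.card_range]
          exact_mod_cast Nat.cast_le.mpr (min_le_right _ _)
  -- pass to the limit
  have hAT : (∫ ω, gpc d c (walk d ξ v T₀ ω) ∂P)
      ≤ ∫ ω, ((sInf {s | walk d ξ v (T₀+s) ω < c} : ℕ) : ℝ) ∂P := by
    have hbd : ∀ S, (∫ ω, gpc d c (walk d ξ v T₀ ω) ∂P)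
        - gfun d c 1 * (P ((fun ω (i : ℕ) => ξ i ω) ⁻¹' ASeq d c v T₀ S)).toReal
        ≤ ∫ ω, ((sInf {s | walk d ξ v (T₀+s) ω < c} : ℕ) : ℝ) ∂P :=
      fun S => le_trans (hA2 S) (hsum_le S)
    have htt : Filter.Tendsto (fun S => (∫ ω, gpc d c (walk d ξ v T₀ ω) ∂P)
        - gfun d c 1 * (P ((fun ω (i : ℕ) => ξ i ω) ⁻¹' ASeq d c v T₀ S)).toReal)
        Filter.atTop (nhds ((∫ ω, gpc d c (walk d ξ v T₀ ω) ∂P) - gfun d c 1 * 0)) :=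
      tendsto_const_nhds.sub (htend.const_mul _)
    rw [mul_zero, sub_zero] at htt
    exact le_of_tendsto' htt hbd
  -- final numeric chain
  have hPsi := Psi_start (T₀ := T₀) (c := c) hd0 hG.le hv0 hv1 hT₀l
  have hchain : (v/2) * (((1-c)^2 - 2/3)/d^2 - 1) ≤ Gc d c T₀ * v / 2 := by
    have h := mul_le_mul_of_nonneg_left hGlb (by linarith : (0:ℝ) ≤ v/2)
    nlinarith [h]
  linarith [hPsi, hA1, hAT, hchain]

end MainCase

theorem free_trial_ppp_revenue' {Ω : Type} [MeasurableSpace Ω] (P : Measure Ω)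
    [IsProbabilityMeasure P] (ξ : ℕ → Ω → ℝ)
    (hmeas : ∀ i, Measurable (ξ i))
    (hind : iIndepFun (m := fun _ => Real.measurableSpace) ξ P)
    (hlaw : ∀ i, Measure.map (ξ i) P
      = (1 / 2 : ENNReal) • Measure.dirac (1 : ℝ) + (1 / 2 : ENNReal) • Measure.dirac (-1 : ℝ))
    (n : ℕ) (hn : 2 ≤ n) (δ : ℝ) (hδ : δ = 1 / n)
    (c : ℝ) (hc : c ∈ stateSpace n) (hc23 : 2 / 3 < (1 - c) ^ 2)
    (T₀ : ℕ) (hT₀ : T₀ = ⌈2 / (3 * δ ^ 2)⌉₊)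
    (v : ℝ) (hv : v ∈ stateSpace n) :
    (c * v / 2) * (((1 - c) ^ 2 - 2 / 3) / δ ^ 2 - 1)
      ≤ c * ∫ ω, ((sInf {s : ℕ | walk δ ξ v (T₀ + s) ω < c} : ℕ) : ℝ) ∂P := by
  by_cases hc0 : c = 0
  · subst hc0
    simp
  · have hnn : (0:ℝ) ≤ 2 / (3 * δ ^ 2) := by positivity
    have hT₀l : 2/(3*δ^2) ≤ (T₀:ℝ) := by rw [hT₀]; exact Nat.le_ceil _
    have hT₀u : (T₀:ℝ) < 2/(3*δ^2)+1 := by rw [hT₀]; exact Nat.ceil_lt_add_one hnn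
    have h := main_case hmeas hind hlaw hn hδ hc hc0 hc23 hT₀l hT₀u hv
    have hcnn : 0 ≤ c := mem_nonneg hc
    calc (c * v / 2) * (((1 - c) ^ 2 - 2 / 3) / δ ^ 2 - 1)
        = c * ((v/2) * (((1-c)^2 - 2/3)/δ^2 - 1)) := by ring
      _ ≤ c * ∫ ω, ((sInf {s : ℕ | walk δ ξ v (T₀ + s) ω < c} : ℕ) : ℝ) ∂P :=
          mul_le_mul_of_nonneg_left h hcnn

/-- Let `c ∈ S` with `(1 − c)² > 2/3`, let `T₀ = ⌈2/(3δ²)⌉` be the length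
of the free-trial period, and let `T′ = min {s ≥ 0 : V_{T₀+s} < c}` be the number of uses
bought at price `c` after the trial by an infinitely risk-averse buyer.  Then for every
`v ∈ S`, the expected revenue of the free-trial-plus-PPP scheme satisfies
`c·E_v[T′] ≥ (c·v/2)·(((1 − c)² − 2/3)/δ² − 1)`. -/
theorem free_trial_ppp_revenue {Ω : Type} [MeasurableSpace Ω] (P : Measure Ω)
    [IsProbabilityMeasure P] (ξ : ℕ → Ω → ℝ) (hξ : IsCoinSeq P ξ)
    (n : ℕ) (hn : 2 ≤ n) (δ : ℝ) (hδ : δ = 1 / n)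
    (c : ℝ) (hc : c ∈ stateSpace n) (hc23 : 2 / 3 < (1 - c) ^ 2)
    (T₀ : ℕ) (hT₀ : T₀ = ⌈2 / (3 * δ ^ 2)⌉₊)
    (v : ℝ) (hv : v ∈ stateSpace n) :
    (c * v / 2) * (((1 - c) ^ 2 - 2 / 3) / δ ^ 2 - 1)
      ≤ c * ∫ ω, ((sInf {s : ℕ | walk δ ξ v (T₀ + s) ω < c} : ℕ) : ℝ) ∂P := by
  obtain ⟨hmeas, hind, hlaw⟩ := hξ
  exact free_trial_ppp_revenue' P ξ hmeas hind hlaw n hn δ hδ c hc hc23 T₀ hT₀ v hv
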